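/- arXiv:math/0511294 — 6 statements merged into one kernel-verified Lean document; each statement's English description precedes it below -/
import Mathlib

section
/- For every integer n ≥ 1, the inequality 2n·C(2n−1, n) + Σ_{i=n}^{2n} C(2n, i) < (2n+1)·C(2n, n) holds, where C denotes the binomial coefficient. -/
open Pointwise Matrix

/-- Ambient space `ℝ^d`. -/
abbrev E (d : ℕ) := Fin d → ℝ

/-- A point of the lattice `M ≅ ℤ^d`. -/
def IsLatticePt {d : ℕ} (x : E d) : Prop := ∀ i, ∃ n : ℤ, x i = (n : ℝ)

/-- The standard pairing between `N_ℝ` and `M_ℝ`. -/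
def dot {d : ℕ} (x y : E d) : ℝ := ∑ i, x i * y i

/-- The dual (polar) polytope `P* = {x : ⟨x,y⟩ ≥ -1 ∀ y ∈ P}`. -/
def polarDual {d : ℕ} (P : Set (E d)) : Set (E d) := {x | ∀ y ∈ P, -1 ≤ dot x y}

/-- A lattice polytope: convex hull of finitely many lattice points. -/
def IsLatticePolytope {d : ℕ} (P : Set (E d)) : Prop :=
  ∃ S : Finset (E d), (∀ x ∈ S, IsLatticePt x) ∧ P = convexHull ℝ (S : Set (E d))

/-- A reflexive polytope: a lattice polytope with `0` in its interior whose polar dual is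
again a lattice polytope (i.e. the hull of its lattice points). -/
def IsReflexive {d : ℕ} (P : Set (E d)) : Prop :=
  IsLatticePolytope P ∧ 0 ∈ interior P ∧
    polarDual P = convexHull ℝ {x | x ∈ polarDual P ∧ IsLatticePt x}

/-- A facet: a nonempty exposed face of dimension `d - 1`. -/
def IsFacet {d : ℕ} (P F : Set (E d)) : Prop :=
  IsExposed ℝ P F ∧ F.Nonempty ∧
    Module.finrank ℝ (affineSpan ℝ F).direction = d - 1

/-- Simplicial polytope: every facet is a simplex (hull of `d` affinely independent points). -/
def IsSimplicial {d : ℕ} (P : Set (E d)) : Prop :=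
  ∀ F, IsFacet P F → ∃ v : Fin d → E d,
    AffineIndependent ℝ v ∧ F = convexHull ℝ (Set.range v)

/-- Pseudo-symmetric: some facet `F` has `-F` also a facet. -/
def IsPseudoSymmetric {d : ℕ} (P : Set (E d)) : Prop :=
  ∃ F, IsFacet P F ∧ IsFacet P (-F)

/-- Application of an integer matrix to a point of `ℝ^d`. -/
def applyU {d : ℕ} (U : Matrix (Fin d) (Fin d) ℤ) (x : E d) : E d :=
  (U.map (Int.cast : ℤ → ℝ)) *ᵥ x

/-- Wirth matrix: block form `[[2·Id_f, 0], [C, Id_{d-f}]]` with `C` a `{0,1}`-matrix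
each of whose columns has an odd number of `1`'s. -/
def IsWirth {d : ℕ} (A : Matrix (Fin d) (Fin d) ℤ) : Prop :=
  ∃ f : ℕ, f < d ∧
    (∀ i j : Fin d, (i : ℕ) < f → (j : ℕ) < f → A i j = if i = j then 2 else 0) ∧
    (∀ i j : Fin d, (i : ℕ) < f → f ≤ (j : ℕ) → A i j = 0) ∧
    (∀ i j : Fin d, f ≤ (i : ℕ) → (j : ℕ) < f → A i j = 0 ∨ A i j = 1) ∧
    (∀ i j : Fin d, f ≤ (i : ℕ) → f ≤ (j : ℕ) → A i j = if i = j then 1 else 0) ∧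
    (∀ j : Fin d, (j : ℕ) < f →
      Odd (Finset.univ.filter (fun i : Fin d => f ≤ (i : ℕ) ∧ A i j = 1)).card)

/-!
Since `2 * C(2n-1, n) = C(2n, n)` and, by the symmetry `C(2n, i) = C(2n, 2n-i)`, the upper half
of the row sums to `(4^n + C(2n, n)) / 2`, the inequality reduces to `4^n < (2n+1) C(2n, n)`,
which follows from Erdős's bound `4^n ≤ 2n C(2n, n)`.
-/

open Finset

namespace Nat

theorem centralBinom_eq_two_mul_choose_sub_one {n : ℕ} (hn : 0 < n) :
    centralBinom n = 2 * (2 * n - 1).choose n := by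
  obtain ⟨m, rfl⟩ : ∃ m, n = m + 1 := ⟨n - 1, by omega⟩
  rw [centralBinom_eq_two_mul_choose, show 2 * (m + 1) - 1 = 2 * m + 1 by omega,
    show 2 * (m + 1) = 2 * m + 1 + 1 by omega, choose_succ_succ, choose_symm_half]
  omega

theorem sum_Icc_choose_two_mul_eq_sum_range (n : ℕ) :
    ∑ i ∈ Icc n (2 * n), (2 * n).choose i = ∑ i ∈ range (n + 1), (2 * n).choose i := by
  have hreflect := sum_Ico_reflect (fun i => (2 * n).choose i) 0 (m := n + 1) (n := 2 * n)
    (by omega)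
  rw [show 2 * n + 1 - (n + 1) = n by omega, Nat.sub_zero, ← range_eq_Ico,
    Ico_add_one_right_eq_Icc] at hreflect
  rw [← hreflect]
  exact sum_congr rfl fun i hi => choose_symm (by rw [mem_range] at hi; omega)

theorem two_mul_sum_Icc_choose_two_mul (n : ℕ) :
    2 * ∑ i ∈ Icc n (2 * n), (2 * n).choose i = 4 ^ n + centralBinom n := by
  calc 2 * ∑ i ∈ Icc n (2 * n), (2 * n).choose i
      = ∑ i ∈ range (n + 1), (2 * n).choose i + ∑ i ∈ Ico n (2 * n + 1), (2 * n).choose i := by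
        rw [two_mul, Ico_add_one_right_eq_Icc, ← sum_Icc_choose_two_mul_eq_sum_range]
    _ = ∑ i ∈ range (2 * n + 1), (2 * n).choose i + (2 * n).choose n := by
        rw [sum_range_succ, ← sum_range_add_sum_Ico _ (by omega : n ≤ 2 * n + 1)]
        ring
    _ = 4 ^ n + centralBinom n := by
        rw [sum_range_choose, pow_mul, centralBinom_eq_two_mul_choose]
        norm_num

theorem four_pow_lt_two_mul_add_one_mul_centralBinom {n : ℕ} (hn : 0 < n) :
    4 ^ n < (2 * n + 1) * centralBinom n := by
  calc 4 ^ n ≤ 2 * n * centralBinom n := four_pow_le_two_mul_self_mul_centralBinom n hn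
    _ < (2 * n + 1) * centralBinom n :=
        Nat.mul_lt_mul_of_pos_right (Nat.lt_succ_self _) (centralBinom_pos n)

end Nat

theorem pseudo_delPezzo_facets_lt_delPezzo_facets (n : ℕ) (hn : 1 ≤ n) :
    2 * n * Nat.choose (2 * n - 1) n + ∑ i ∈ Finset.Icc n (2 * n), Nat.choose (2 * n) i
      < (2 * n + 1) * Nat.choose (2 * n) n := by
  have hchoose := Nat.centralBinom_eq_two_mul_choose_sub_one hn
  have hsum := Nat.two_mul_sum_Icc_choose_two_mul n
  have hbound := Nat.four_pow_lt_two_mul_add_one_mul_centralBinom hn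
  rw [← Nat.centralBinom_eq_two_mul_choose]
  nlinarith
end

section
/- For every integer n ≥ 1, (2n+1)·C(2n, n) ≤ 6^n, with equality if and only if n = 1. -/
open Pointwise Matrix

/-!
Write `f n = (2n+1)·C(2n,n)`. From `(n+1)·C(2n+2,n+1) = 2(2n+1)·C(2n,n)` one gets
`(n+1)·f(n+1) = 2(2n+3)·f n`, and `2(2n+3) < 6(n+1)` once `n ≥ 1`. So `f` grows by a factor
strictly less than `6` at every step after `f 1 = 6`.
-/

def delPezzoFacetCount (n : ℕ) : ℕ := (2 * n + 1) * n.centralBinom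

theorem delPezzoFacetCount_one : delPezzoFacetCount 1 = 6 := rfl

theorem succ_mul_delPezzoFacetCount_succ (n : ℕ) :
    (n + 1) * delPezzoFacetCount (n + 1) = 2 * (2 * n + 3) * delPezzoFacetCount n := by
  unfold delPezzoFacetCount
  calc (n + 1) * ((2 * (n + 1) + 1) * (n + 1).centralBinom)
      = (2 * n + 3) * ((n + 1) * (n + 1).centralBinom) := by ring
    _ = (2 * n + 3) * (2 * (2 * n + 1) * n.centralBinom) := by
        rw [Nat.succ_mul_centralBinom_succ]
    _ = 2 * (2 * n + 3) * ((2 * n + 1) * n.centralBinom) := by ring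

theorem delPezzoFacetCount_succ_lt {n : ℕ} (hn : 1 ≤ n) :
    delPezzoFacetCount (n + 1) < 6 * delPezzoFacetCount n := by
  have hpos : 0 < delPezzoFacetCount n := Nat.mul_pos (by omega) n.centralBinom_pos
  refine Nat.lt_of_mul_lt_mul_left (a := n + 1) ?_
  calc (n + 1) * delPezzoFacetCount (n + 1)
      = 2 * (2 * n + 3) * delPezzoFacetCount n := succ_mul_delPezzoFacetCount_succ n
    _ < (n + 1) * (6 * delPezzoFacetCount n) := by nlinarith

theorem delPezzoFacetCount_lt_six_pow {n : ℕ} (hn : 2 ≤ n) : delPezzoFacetCount n < 6 ^ n := by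
  induction n, hn using Nat.le_induction with
  | base => decide
  | succ n hn ih =>
    calc delPezzoFacetCount (n + 1) < 6 * delPezzoFacetCount n :=
          delPezzoFacetCount_succ_lt (by omega)
      _ < 6 * 6 ^ n := by omega
      _ = 6 ^ (n + 1) := (pow_succ' 6 n).symm

theorem delPezzo_facets_le_six_pow (n : ℕ) (hn : 1 ≤ n) :
    (2 * n + 1) * Nat.choose (2 * n) n ≤ 6 ^ n ∧
      ((2 * n + 1) * Nat.choose (2 * n) n = 6 ^ n ↔ n = 1) := by
  change delPezzoFacetCount n ≤ 6 ^ n ∧ (delPezzoFacetCount n = 6 ^ n ↔ n = 1)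
  obtain rfl | hn2 := hn.eq_or_lt
  · simp [delPezzoFacetCount_one]
  · have hlt := delPezzoFacetCount_lt_six_pow hn2
    exact ⟨hlt.le, by omega⟩
end

section
/- Let d be an even positive integer and e_1, …, e_d a basis of ℤ^d. The facets of the del Pezzo polytope V_d = conv(±e_0, ±e_1, …, ±e_d), where e_0 := −e_1 − ⋯ − e_d, are exactly the convex hulls of {ε_j e_j : j ∈ {0,…,d}, j ≠ i} for a fixed i ∈ {0,…,d} and signs ε_j ∈ {±1} with exactly d/2 of the ε_j equal to +1. Consequently V_d has (d+1)·C(d, d/2) facets. -/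
open Pointwise Matrix

/-- Real coordinates of the given lattice basis vectors. -/
def eR (d : ℕ) (e : Fin d → Fin d → ℤ) : Fin d → E d := fun i j => (e i j : ℝ)

/-- The points `e_0 = -e_1 - ⋯ - e_d, e_1, …, e_d` (indexed by `Fin (d+1)`). -/
def dpV (d : ℕ) (e : Fin d → Fin d → ℤ) : Fin (d + 1) → E d :=
  Fin.cons (-(∑ i, eR d e i)) (eR d e)

/-- The del Pezzo polytope `V_d = conv(±e_0, ±e_1, …, ±e_d)`. -/
def delPezzo (d : ℕ) (e : Fin d → Fin d → ℤ) : Set (E d) :=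
  convexHull ℝ (Set.range (dpV d e) ∪ Set.range (fun j => -(dpV d e j)))

namespace DelPezzoAux

open Finset

/-- ±1 sums vs counts. -/
theorem pm_sum {α : Type*} [DecidableEq α] (s : Finset α) (ζ : α → ℤ)
    (hpm : ∀ j ∈ s, ζ j = 1 ∨ ζ j = -1) :
    ∑ j ∈ s, ζ j = 2 * ((s.filter fun j => ζ j = 1).card : ℤ) - (s.card : ℤ) := by
  classical
  have h1 : ∑ j ∈ s.filter (fun j => ζ j = 1), ζ j
      = ((s.filter fun j => ζ j = 1).card : ℤ) := by
    rw [Finset.sum_congr rfl (fun j hj => (Finset.mem_filter.1 hj).2)]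
    simp
  have h2 : ∑ j ∈ s.filter (fun j => ¬ ζ j = 1), ζ j
      = -(((s.filter fun j => ¬ ζ j = 1).card : ℤ)) := by
    rw [Finset.sum_congr rfl
      (fun j hj => (hpm j (Finset.mem_filter.1 hj).1).resolve_left (Finset.mem_filter.1 hj).2)]
    simp
  have h3 := Finset.sum_filter_add_sum_filter_not s (fun j => ζ j = 1) ζ
  have h4 := Finset.card_filter_add_card_filter_not (s := s) (p := fun j => ζ j = 1)
  rw [h1, h2] at h3
  omega

theorem sum_dpV (d : ℕ) (e : Fin d → Fin d → ℤ) : ∑ j, dpV d e j = 0 := by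
  rw [Fin.sum_univ_succ]
  simp [dpV]

theorem eR_li (d : ℕ) (e : Fin d → Fin d → ℤ) (hbasis : IsUnit (Matrix.of e).det) :
    LinearIndependent ℝ (eR d e) := by
  have h1 : IsUnit ((Matrix.of e).map (Int.cast : ℤ → ℝ)).det := by
    have hdet : ((Matrix.of e).map (Int.cast : ℤ → ℝ)).det = (((Matrix.of e).det : ℤ) : ℝ) := by
      rw [show (Int.cast : ℤ → ℝ) = ⇑(Int.castRingHom ℝ) from rfl, ← RingHom.mapMatrix_apply,
        ← RingHom.map_det]
    rw [hdet]
    exact hbasis.map (Int.castRingHom ℝ).toMonoidHom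
  have h2 := Matrix.linearIndependent_rows_iff_isUnit.2 ((Matrix.isUnit_iff_isUnit_det _).2 h1)
  have h3 : eR d e = fun i => ((Matrix.of e).map (Int.cast : ℤ → ℝ)) i := by
    funext i j; simp [eR, Matrix.map_apply]
  rw [h3]
  exact h2

/-- The finite set of vertices. -/
noncomputable def dpS (d : ℕ) (e : Fin d → Fin d → ℤ) : Finset (E d) :=
  Finset.image (dpV d e) Finset.univ ∪ Finset.image (fun j => -(dpV d e j)) Finset.univ

theorem mem_dpS {d : ℕ} {e : Fin d → Fin d → ℤ} {s : E d} :
    s ∈ dpS d e ↔ (∃ j, s = dpV d e j) ∨ (∃ j, s = -dpV d e j) := by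
  simp [dpS, eq_comm]

theorem delPezzo_eq (d : ℕ) (e : Fin d → Fin d → ℤ) :
    delPezzo d e = convexHull ℝ ((dpS d e : Finset (E d)) : Set (E d)) := by
  simp only [delPezzo, dpS, Finset.coe_union, Finset.coe_image, Finset.coe_univ,
    Set.image_univ]

end DelPezzoAux
namespace DelPezzoAux

open Finset

theorem w_li {d : ℕ} (hd : 0 < d) (e : Fin d → Fin d → ℤ)
    (hv : LinearIndependent ℝ (eR d e)) (i : Fin (d + 1)) :
    LinearIndependent ℝ (fun k : Fin d => dpV d e (i.succAbove k)) := by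
  classical
  obtain ⟨m, rfl⟩ : ∃ m, d = m + 1 := ⟨d - 1, by omega⟩
  haveI : Nonempty (Fin (m + 1)) := ⟨0⟩
  induction i using Fin.cases with
  | zero =>
    have : (fun k : Fin (m + 1) => dpV (m + 1) e ((0 : Fin (m + 2)).succAbove k)) = eR (m + 1) e := by
      funext k
      rw [Fin.succAbove_zero]
      simp [dpV]
    rw [this]; exact hv
  | succ j =>
    set b := basisOfLinearIndependentOfCardEqFinrank hv
      (by simp [Module.finrank_fintype_fun_eq_card]) with hbdef
    have hb : ⇑b = eR (m + 1) e := coe_basisOfLinearIndependentOfCardEqFinrank _ _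
    rw [Fintype.linearIndependent_iff]
    intro c hc
    rw [Fin.sum_univ_succ] at hc
    have h0 : (Fin.succ j).succAbove 0 = 0 := Fin.succ_succAbove_zero j
    have hsucc : ∀ k : Fin m, dpV (m + 1) e ((Fin.succ j).succAbove k.succ)
        = eR (m + 1) e (j.succAbove k) := by
      intro k
      rw [Fin.succ_succAbove_succ]
      simp [dpV]
    rw [h0] at hc
    simp only [hsucc] at hc
    have hw0 : dpV (m + 1) e 0 = -(∑ t, eR (m + 1) e t) := by simp [dpV]
    rw [hw0] at hc
    -- apply coordinate functional b.coord j
    have hφ : ∀ t, (b.coord j) (eR (m + 1) e t) = if t = j then 1 else 0 := by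
      intro t
      rw [← congrFun hb t, Module.Basis.coord_apply, Module.Basis.repr_self, Finsupp.single_apply]
    have hc0 : c 0 = 0 := by
      have hzero : ∀ k : Fin m, (if j.succAbove k = j then (1:ℝ) else 0) = 0 := fun k =>
        if_neg (Fin.succAbove_ne j k)
      have h := congrArg (b.coord j) hc
      simp only [map_add, _root_.map_smul, map_neg, map_sum, map_zero, hφ, hzero,
        smul_eq_mul, mul_zero, Finset.sum_const_zero, add_zero, smul_neg,
        Finset.sum_ite_eq', Finset.mem_univ, if_true, mul_one] at h
      linarith
    have hrest : ∑ k : Fin m, c k.succ • eR (m + 1) e (j.succAbove k) = 0 := by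
      rw [hc0] at hc; simpa using hc
    have hli2 : LinearIndependent ℝ (fun k : Fin m => eR (m + 1) e (j.succAbove k)) :=
      hv.comp j.succAbove Fin.succAbove_right_injective
    have hallz := Fintype.linearIndependent_iff.1 hli2 (fun k => c k.succ) hrest
    intro k
    induction k using Fin.cases with
    | zero => exact hc0
    | succ k' => exact hallz k'

theorem exists_functional {d : ℕ} (hd : 0 < d) (e : Fin d → Fin d → ℤ)
    (hv : LinearIndependent ℝ (eR d e)) (i : Fin (d + 1)) (ε : Fin (d + 1) → ℝ)
    (hsum : ∑ j ∈ Finset.univ.erase i, ε j = 0) :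
    ∃ l : E d →L[ℝ] ℝ, ∀ j, l (dpV d e j) = if j = i then 0 else ε j := by
  classical
  haveI : Nonempty (Fin d) := ⟨⟨0, hd⟩⟩
  set b := basisOfLinearIndependentOfCardEqFinrank hv
    (by simp [Module.finrank_fintype_fun_eq_card]) with hbdef
  have hb : ⇑b = eR d e := coe_basisOfLinearIndependentOfCardEqFinrank _ _
  set g : Fin (d + 1) → ℝ := fun j => if j = i then 0 else ε j with hg
  set l₀ : E d →ₗ[ℝ] ℝ := b.constr ℝ (fun k => g k.succ) with hl₀
  have hval : ∀ k : Fin d, l₀ (eR d e k) = g k.succ := by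
    intro k
    rw [← congrFun hb k]
    exact b.constr_basis ℝ (fun k => g k.succ) k
  have hsumg : ∑ j, g j = 0 := by
    rw [← Finset.add_sum_erase _ g (Finset.mem_univ i)]
    have : ∑ j ∈ Finset.univ.erase i, g j = ∑ j ∈ Finset.univ.erase i, ε j :=
      Finset.sum_congr rfl fun j hj => if_neg (Finset.mem_erase.1 hj).1
    rw [this, hsum, hg]
    simp
  refine ⟨LinearMap.toContinuousLinearMap l₀, ?_⟩
  intro j
  show l₀ (dpV d e j) = g j
  induction j using Fin.cases with
  | zero =>
    have hw0 : dpV d e 0 = -(∑ t, eR d e t) := by simp [dpV]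
    rw [hw0, map_neg, map_sum]
    rw [Finset.sum_congr rfl (fun k _ => hval k)]
    have hs := Fin.sum_univ_succ g
    rw [hsumg] at hs
    linarith
  | succ k =>
    have : dpV d e k.succ = eR d e k := by simp [dpV]
    rw [this, hval k]

end DelPezzoAux
namespace DelPezzoAux

open Finset

theorem expFace {d : ℕ} (S : Finset (E d)) (l : E d →L[ℝ] ℝ) (m : ℝ)
    (hub : ∀ s ∈ S, l s ≤ m) (hatt : ∃ s ∈ S, l s = m) :
    {x | x ∈ convexHull ℝ (S : Set (E d)) ∧ ∀ y ∈ convexHull ℝ (S : Set (E d)), l y ≤ l x} =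
      convexHull ℝ (((S.filter fun s => l s = m) : Finset (E d)) : Set (E d)) := by
  classical
  have hlin : IsLinearMap ℝ l := ⟨map_add l, fun c x => map_smul l c x⟩
  have hPle : ∀ x ∈ convexHull ℝ (S : Set (E d)), l x ≤ m := fun x hx =>
    convexHull_min (fun s hs => hub s hs) (convex_halfSpace_le hlin m) hx
  obtain ⟨s₀, hs₀S, hs₀⟩ := hatt
  apply Set.Subset.antisymm
  · rintro x ⟨hxP, hxmax⟩
    have hxm : l x = m :=
      le_antisymm (hPle x hxP) (hs₀ ▸ hxmax s₀ (subset_convexHull ℝ _ hs₀S))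
    rw [Finset.convexHull_eq] at hxP
    obtain ⟨ω, hω0, hω1, hωx⟩ := hxP
    rw [Finset.centerMass_eq_of_sum_1 _ _ hω1] at hωx
    have hlx : ∑ y ∈ S, ω y * l y = m := by
      have := congrArg l hωx
      rw [map_sum] at this
      simp only [_root_.map_smul, smul_eq_mul, id] at this
      rw [this, hxm]
    have hterm : ∀ y ∈ S, ω y * (m - l y) = 0 := by
      rw [← Finset.sum_eq_zero_iff_of_nonneg
        (fun y hy => mul_nonneg (hω0 y hy) (sub_nonneg.2 (hub y hy)))]
      have hs : ∑ y ∈ S, ω y * (m - l y) = (∑ y ∈ S, ω y) * m - ∑ y ∈ S, ω y * l y := by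
        rw [Finset.sum_mul, ← Finset.sum_sub_distrib]
        exact Finset.sum_congr rfl fun y _ => by ring
      rw [hs, hω1, hlx]; ring
    have hω0' : ∀ y ∈ S, ¬ l y = m → ω y = 0 := by
      intro y hy hne
      rcases mul_eq_zero.1 (hterm y hy) with h | h
      · exact h
      · exact absurd (by linarith : l y = m) hne
    rw [Finset.convexHull_eq]
    have hsum1 : ∑ y ∈ S.filter (fun s => l s = m), ω y = 1 := by
      rw [Finset.sum_filter_of_ne (fun y hy hne => ?_)]
      · exact hω1
      · by_contra hc
        exact hne (hω0' y hy hc)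
    refine ⟨ω, fun y hy => hω0 y (Finset.mem_filter.1 hy).1, hsum1, ?_⟩
    rw [Finset.centerMass_eq_of_sum_1 _ _ hsum1]
    rw [Finset.sum_filter_of_ne (fun y hy hne => ?_)]
    · exact hωx
    · by_contra hc
      have := hω0' y hy hc
      rw [this] at hne
      simp at hne
  · intro x hx
    have hxF : l x = m := by
      have : convexHull ℝ (((S.filter fun s => l s = m) : Finset (E d)) : Set (E d)) ⊆
          {z | l z = m} :=
        convexHull_min (fun s hs => (Finset.mem_filter.1 hs).2) (convex_hyperplane hlin m)
      exact this hx
    refine ⟨convexHull_mono (Finset.coe_subset.2 (Finset.filter_subset _ _)) hx, ?_⟩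
    intro y hy
    rw [hxF]
    exact hPle y hy

end DelPezzoAux
namespace DelPezzoAux

open Finset

theorem isFacet_of_data {d : ℕ} (hd : 0 < d) (hev : Even d) (e : Fin d → Fin d → ℤ)
    (hv : LinearIndependent ℝ (eR d e)) (i : Fin (d + 1)) (ε : Fin (d + 1) → ℝ)
    (hpm : ∀ j, ε j = 1 ∨ ε j = -1)
    (hcard : (Finset.univ.filter fun j : Fin (d + 1) => j ≠ i ∧ ε j = 1).card = d / 2) :
    ∃ l : E d →L[ℝ] ℝ, (∀ j, l (dpV d e j) = if j = i then 0 else ε j) ∧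
      IsFacet (delPezzo d e) (convexHull ℝ ((fun j => ε j • dpV d e j) '' {j | j ≠ i})) := by
  classical
  obtain ⟨c, hc⟩ := hev
  -- integer signs
  set ζ : Fin (d + 1) → ℤ := fun j => if ε j = 1 then 1 else -1 with hζ
  have hεζ : ∀ j, ε j = (ζ j : ℝ) := by
    intro j
    rcases hpm j with h | h <;> simp [hζ, h] <;> norm_num
  have hζpm : ∀ j ∈ Finset.univ.erase i, ζ j = 1 ∨ ζ j = -1 := fun j _ => by
    rcases hpm j with h | h <;> simp [hζ, h] <;> norm_num
  have hfilt : (Finset.univ.erase i).filter (fun j => ζ j = 1)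
      = Finset.univ.filter (fun j : Fin (d + 1) => j ≠ i ∧ ε j = 1) := by
    ext j
    rcases hpm j with h | h <;>
      simp [hζ, h, Finset.mem_erase, Finset.mem_filter, and_comm] <;> norm_num
  have hζsum : ∑ j ∈ Finset.univ.erase i, ζ j = 0 := by
    rw [pm_sum _ _ hζpm, hfilt, hcard]
    have hce : (Finset.univ.erase i).card = d := by
      rw [Finset.card_erase_of_mem (Finset.mem_univ i)]
      simp
    rw [hce]
    omega
  have hsum : ∑ j ∈ Finset.univ.erase i, ε j = 0 := by
    have : ∑ j ∈ Finset.univ.erase i, ε j = ((∑ j ∈ Finset.univ.erase i, ζ j : ℤ) : ℝ) := by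
      push_cast
      exact Finset.sum_congr rfl fun j _ => hεζ j
    rw [this, hζsum]
    simp
  obtain ⟨l, hl⟩ := exists_functional hd e hv i ε hsum
  refine ⟨l, hl, ?_, ?_, ?_⟩
  · -- IsExposed
    intro _
    refine ⟨l, ?_⟩
    have hub : ∀ s ∈ dpS d e, l s ≤ 1 := by
      intro s hs
      rcases mem_dpS.1 hs with ⟨j, rfl⟩ | ⟨j, rfl⟩
      · rw [hl j]
        split
        · norm_num
        · rcases hpm j with h | h <;> rw [h] <;> norm_num
      · rw [map_neg, hl j]
        split
        · norm_num
        · rcases hpm j with h | h <;> rw [h] <;> norm_num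
    have hatt : ∃ s ∈ dpS d e, l s = 1 := by
      set j₀ : Fin (d + 1) := i.succAbove ⟨0, hd⟩ with hj₀def
      have hj₀ : j₀ ≠ i := Fin.succAbove_ne i _
      rcases hpm j₀ with h | h
      · exact ⟨dpV d e j₀, mem_dpS.2 (Or.inl ⟨j₀, rfl⟩), by rw [hl j₀, if_neg hj₀, h]⟩
      · refine ⟨-dpV d e j₀, mem_dpS.2 (Or.inr ⟨j₀, rfl⟩), ?_⟩
        rw [map_neg, hl j₀, if_neg hj₀, h]
        norm_num
    have hsetEq : (((dpS d e).filter fun s => l s = 1 : Finset (E d)) : Set (E d)) =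
        (fun j => ε j • dpV d e j) '' {j | j ≠ i} := by
      ext s
      simp only [Finset.coe_filter, Set.mem_setOf_eq, Set.mem_image]
      constructor
      · rintro ⟨hsS, hs1⟩
        rcases mem_dpS.1 hsS with ⟨j, rfl⟩ | ⟨j, rfl⟩
        · have hji : j ≠ i := by
            rintro rfl
            rw [hl j, if_pos rfl] at hs1
            norm_num at hs1
          have hε : ε j = 1 := by rw [hl j, if_neg hji] at hs1; exact hs1
          exact ⟨j, hji, by rw [hε, one_smul]⟩
        · have hji : j ≠ i := by
            rintro rfl
            rw [map_neg, hl j, if_pos rfl] at hs1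
            norm_num at hs1
          have hε : ε j = -1 := by
            rw [map_neg, hl j, if_neg hji] at hs1
            linarith
          exact ⟨j, hji, by rw [hε]; simp⟩
      · rintro ⟨j, hji, rfl⟩
        constructor
        · rcases hpm j with h | h
          · exact mem_dpS.2 (Or.inl ⟨j, by rw [h, one_smul]⟩)
          · exact mem_dpS.2 (Or.inr ⟨j, by rw [h]; simp⟩)
        · rw [_root_.map_smul, smul_eq_mul, hl j, if_neg hji]
          rcases hpm j with h | h <;> rw [h] <;> norm_num
    rw [delPezzo_eq, expFace (dpS d e) l 1 hub hatt, hsetEq]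
  · -- nonempty
    set j₀ : Fin (d + 1) := i.succAbove ⟨0, hd⟩ with hj₀def
    exact ⟨ε j₀ • dpV d e j₀,
      subset_convexHull ℝ _ ⟨j₀, Fin.succAbove_ne i _, rfl⟩⟩
  · -- dimension
    have himgEq : (fun j => ε j • dpV d e j) '' {j | j ≠ i} =
        Set.range (fun k : Fin d => ε (i.succAbove k) • dpV d e (i.succAbove k)) := by
      have h1 : {j : Fin (d + 1) | j ≠ i} = Set.range i.succAbove := by
        rw [Fin.range_succAbove]
        ext j
        simp
      rw [h1, ← Set.range_comp]
      rfl
    have hgli : LinearIndependent ℝ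
        (fun k : Fin d => ε (i.succAbove k) • dpV d e (i.succAbove k)) := by
      have hwli := w_li hd e hv i
      have h2 := hwli.units_smul (fun k => if ε (i.succAbove k) = 1 then 1 else (-1 : ℝˣ))
      have h3 : ((fun k => if ε (i.succAbove k) = 1 then 1 else (-1 : ℝˣ)) •
          (fun k : Fin d => dpV d e (i.succAbove k))) =
          fun k : Fin d => ε (i.succAbove k) • dpV d e (i.succAbove k) := by
        funext k
        rcases hpm (i.succAbove k) with h | h <;>
          simp [Pi.smul_apply', h] <;> norm_num
      rw [h3] at h2
      exact h2
    have hgai : AffineIndependent ℝ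
        (fun k : Fin d => ε (i.succAbove k) • dpV d e (i.succAbove k)) := by
      rw [affineIndependent_iff]
      intro s wt _ h2 j hj
      exact linearIndependent_iff'.1 hgli s wt h2 j hj
    rw [affineSpan_convexHull, himgEq, direction_affineSpan]
    exact hgai.finrank_vectorSpan (by rw [Fintype.card_fin]; omega)

end DelPezzoAux
namespace DelPezzoAux

open Finset

theorem facet_forward {d : ℕ} (hd : 0 < d) (hev : Even d) (e : Fin d → Fin d → ℤ)
    (hv : LinearIndependent ℝ (eR d e)) (F : Set (E d))
    (hF : IsFacet (delPezzo d e) F) :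
    ∃ (i : Fin (d + 1)) (ε : Fin (d + 1) → ℝ),
      (∀ j, ε j = 1 ∨ ε j = -1) ∧
      (Finset.univ.filter (fun j : Fin (d + 1) => j ≠ i ∧ ε j = 1)).card = d / 2 ∧
      F = convexHull ℝ ((fun j => ε j • dpV d e j) '' {j | j ≠ i}) := by
  classical
  obtain ⟨c, hc⟩ := hev
  have hd2 : 2 ≤ d := by omega
  obtain ⟨hexp, hne, hdim⟩ := hF
  obtain ⟨l, hlF⟩ := hexp hne
  rw [delPezzo_eq] at hlF
  have hne' : (Finset.univ : Finset (Fin (d + 1))).Nonempty := Finset.univ_nonempty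
  set m := Finset.univ.sup' hne' (fun j => |l (dpV d e j)|) with hm
  have habs : ∀ j, |l (dpV d e j)| ≤ m := fun j =>
    Finset.le_sup' (fun j => |l (dpV d e j)|) (Finset.mem_univ j)
  have hub : ∀ s ∈ dpS d e, l s ≤ m := by
    intro s hs
    rcases mem_dpS.1 hs with ⟨j, rfl⟩ | ⟨j, rfl⟩
    · exact le_trans (le_abs_self _) (habs j)
    · rw [map_neg]
      exact le_trans (neg_le_abs _) (habs j)
  have hatt : ∃ s ∈ dpS d e, l s = m := by
    obtain ⟨j₀, _, hj₀⟩ := Finset.exists_mem_eq_sup' hne' (fun j => |l (dpV d e j)|)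
    rcases abs_cases (l (dpV d e j₀)) with ⟨h1, _⟩ | ⟨h1, _⟩
    · exact ⟨dpV d e j₀, mem_dpS.2 (Or.inl ⟨j₀, rfl⟩), by rw [hm, hj₀]; exact h1.symm⟩
    · refine ⟨-dpV d e j₀, mem_dpS.2 (Or.inr ⟨j₀, rfl⟩), ?_⟩
      rw [map_neg, hm, hj₀]
      exact h1.symm
  have hFA : F = convexHull ℝ
      (((dpS d e).filter fun s => l s = m : Finset (E d)) : Set (E d)) := by
    rw [hlF]
    exact expFace (dpS d e) l m hub hatt
  set A : Finset (E d) := (dpS d e).filter (fun s => l s = m) with hA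
  -- m > 0
  have hm0 : m ≠ 0 := by
    intro h0
    have hall : ∀ s ∈ dpS d e, l s = m := by
      intro s hs
      have h1 : |l s| ≤ m := by
        rcases mem_dpS.1 hs with ⟨j, rfl⟩ | ⟨j, rfl⟩
        · exact habs j
        · rw [map_neg, abs_neg]; exact habs j
      rw [h0] at h1 ⊢
      have := abs_nonneg (l s)
      have : |l s| = 0 := le_antisymm h1 this
      exact abs_eq_zero.1 this
    have hFP : F = convexHull ℝ ((dpS d e : Finset (E d)) : Set (E d)) := by
      rw [hFA, hA, Finset.filter_true_of_mem hall]
    have htop : vectorSpan ℝ ((dpS d e : Finset (E d)) : Set (E d)) = ⊤ := by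
      haveI : Nonempty (Fin d) := ⟨⟨0, hd⟩⟩
      set b := basisOfLinearIndependentOfCardEqFinrank hv
        (by simp [Module.finrank_fintype_fun_eq_card]) with hbdef
      have hb : ⇑b = eR d e := coe_basisOfLinearIndependentOfCardEqFinrank _ _
      rw [eq_top_iff, ← b.span_eq, Submodule.span_le, hb]
      rintro x ⟨k, rfl⟩
      have h1 : dpV d e k.succ ∈ ((dpS d e : Finset (E d)) : Set (E d)) :=
        mem_dpS.2 (Or.inl ⟨k.succ, rfl⟩)
      have h2 : -(dpV d e k.succ) ∈ ((dpS d e : Finset (E d)) : Set (E d)) :=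
        mem_dpS.2 (Or.inr ⟨k.succ, rfl⟩)
      have h3 := vsub_mem_vectorSpan ℝ h1 h2
      have h4 : dpV d e k.succ -ᵥ (-(dpV d e k.succ)) = (2 : ℝ) • dpV d e k.succ := by
        rw [vsub_eq_sub, sub_neg_eq_add, two_smul]
      have h5 := Submodule.smul_mem (vectorSpan ℝ ((dpS d e : Finset (E d)) : Set (E d)))
        (2⁻¹ : ℝ) h3
      rw [h4, smul_smul] at h5
      norm_num at h5
      have h6 : eR d e k = dpV d e k.succ := by simp [dpV]
      rw [h6]
      exact h5
    rw [hFP, affineSpan_convexHull, direction_affineSpan, htop] at hdim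
    rw [finrank_top, Module.finrank_fintype_fun_eq_card, Fintype.card_fin] at hdim
    omega
  have hmnn : 0 ≤ m := le_trans (abs_nonneg _) (habs 0)
  have hmpos : 0 < m := lt_of_le_of_ne hmnn (Ne.symm hm0)
  -- at most one of ±w j in A
  have hnotboth : ∀ j, ¬(dpV d e j ∈ A ∧ -dpV d e j ∈ A) := by
    rintro j ⟨h1, h2⟩
    have e1 : l (dpV d e j) = m := (Finset.mem_filter.1 h1).2
    have e2 : l (-dpV d e j) = m := (Finset.mem_filter.1 h2).2
    rw [map_neg, e1] at e2
    linarith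
  -- dimension of F gives |A| ≥ d
  have hdimA : Module.finrank ℝ (vectorSpan ℝ (A : Set (E d))) = d - 1 := by
    rw [hFA, affineSpan_convexHull, direction_affineSpan] at hdim
    exact hdim
  have hAne : A.Nonempty := by
    rcases Finset.eq_empty_or_nonempty A with h | h
    · exfalso
      rw [hFA, h] at hne
      simp at hne
    · exact h
  have hAcard : d ≤ A.card := by
    by_contra hlt
    push_neg at hlt
    have hcard1 : Fintype.card {x // x ∈ A} = (A.card - 1) + 1 := by
      rw [Fintype.card_coe]
      have := Finset.card_pos.2 hAne
      omega
    have hle := finrank_vectorSpan_range_le ℝ (Subtype.val : {x // x ∈ A} → E d) hcard1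
    have hr : Set.range (Subtype.val : {x // x ∈ A} → E d) = (A : Set (E d)) := by
      ext y
      constructor
      · rintro ⟨⟨x, hx⟩, rfl⟩
        exact hx
      · intro hy
        exact ⟨⟨y, hy⟩, rfl⟩
    rw [hr, hdimA] at hle
    omega
  -- the index set J
  set J : Finset (Fin (d + 1)) :=
    Finset.univ.filter (fun j => dpV d e j ∈ A ∨ -dpV d e j ∈ A) with hJ
  have hmemS : ∀ a ∈ A, ∃ j, a = dpV d e j ∨ a = -dpV d e j := by
    intro a ha
    rcases mem_dpS.1 (Finset.mem_filter.1 ha).1 with ⟨j, h⟩ | ⟨j, h⟩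
    · exact ⟨j, Or.inl h⟩
    · exact ⟨j, Or.inr h⟩
  set f : E d → Fin (d + 1) := fun a =>
    if h : ∃ j, a = dpV d e j ∨ a = -dpV d e j then h.choose else 0 with hf
  have hfspec : ∀ a ∈ A, a = dpV d e (f a) ∨ a = -dpV d e (f a) := by
    intro a ha
    rw [hf]
    simp only [dif_pos (hmemS a ha)]
    exact (hmemS a ha).choose_spec
  have hfJ : ∀ a ∈ A, f a ∈ J := by
    intro a ha
    rcases hfspec a ha with h | h
    · exact Finset.mem_filter.2 ⟨Finset.mem_univ _, Or.inl (h ▸ ha)⟩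
    · have : -dpV d e (f a) ∈ A := by rw [← h]; exact ha
      exact Finset.mem_filter.2 ⟨Finset.mem_univ _, Or.inr this⟩
  have hfinj : Set.InjOn f (A : Set (E d)) := by
    intro a ha a' ha' hEq
    rcases hfspec a ha with h1 | h1 <;> rcases hfspec a' ha' with h2 | h2
    · rw [h1, h2, hEq]
    · exfalso
      apply hnotboth (f a)
      refine ⟨h1 ▸ ha, ?_⟩
      rw [hEq, ← h2]
      exact ha'
    · exfalso
      apply hnotboth (f a)
      refine ⟨?_, h1 ▸ ha⟩
      rw [hEq, ← h2]
      exact ha'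
    · rw [h1, h2, hEq]
  have hJcard : d ≤ J.card :=
    le_trans hAcard (Finset.card_le_card_of_injOn f hfJ hfinj)
  -- values of l on vertices indexed by J
  have hlA : ∀ s ∈ A, l s = m := fun s hs => (Finset.mem_filter.1 hs).2
  have hsum0 : ∑ j, l (dpV d e j) = 0 := by
    rw [← map_sum, sum_dpV, map_zero]
  -- J cannot be everything
  have hJne : J ≠ Finset.univ := by
    intro hJu
    set ζ : Fin (d + 1) → ℤ := fun j => if dpV d e j ∈ A then 1 else -1 with hζ
    have hlw : ∀ j, l (dpV d e j) = (ζ j : ℝ) * m := by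
      intro j
      have hjJ : j ∈ J := hJu ▸ Finset.mem_univ j
      rcases (Finset.mem_filter.1 hjJ).2 with h | h
      · have hz : ζ j = 1 := by simp only [hζ]; rw [if_pos h]
        rw [hlA _ h, hz]
        norm_num
      · have hnm : dpV d e j ∉ A := fun hc => hnotboth j ⟨hc, h⟩
        have hz : ζ j = -1 := by simp only [hζ]; rw [if_neg hnm]
        have hval := hlA _ h
        rw [map_neg] at hval
        rw [hz]
        push_cast
        linarith
    have hsz : ((∑ j, ζ j : ℤ) : ℝ) * m = 0 := by
      rw [← hsum0, Finset.sum_congr rfl (fun j _ => hlw j), ← Finset.sum_mul]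
      push_cast
      rfl
    have hsz0 : (∑ j, ζ j : ℤ) = 0 := by
      rcases mul_eq_zero.1 hsz with h | h
      · exact_mod_cast h
      · exact absurd h hm0
    -- parity contradiction
    have hone : ∀ j : Fin (d + 1), ((ζ j : ZMod 2)) = 1 := by
      intro j
      by_cases h : dpV d e j ∈ A
      · have hz : ζ j = 1 := by simp only [hζ]; rw [if_pos h]
        rw [hz]
        push_cast
        rfl
      · have hz : ζ j = -1 := by simp only [hζ]; rw [if_neg h]
        rw [hz]
        push_cast
        decide
    have hpar : ((∑ j, ζ j : ℤ) : ZMod 2) = 1 := by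
      push_cast
      rw [Finset.sum_congr rfl (fun j _ => hone j), Finset.sum_const, Finset.card_univ,
        Fintype.card_fin, nsmul_eq_mul, mul_one]
      have : ((d : ℕ) : ZMod 2) = 0 := by
        rw [hc]
        push_cast
        ring_nf
        rw [show ((2 : ZMod 2)) = 0 from rfl]
        ring
      push_cast
      rw [this]
      ring
    rw [hsz0] at hpar
    simp at hpar
  -- there is a missing index i
  obtain ⟨i, hiJ⟩ : ∃ i, i ∉ J := by
    by_contra hcon
    push_neg at hcon
    exact hJne (Finset.eq_univ_iff_forall.2 hcon)
  have hJcov : ∀ j, j ≠ i → j ∈ J := by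
    intro j hji
    by_contra hjJ
    have hsub : ({i, j} : Finset (Fin (d + 1))) ⊆ Finset.univ \ J := by
      intro x hx
      rcases Finset.mem_insert.1 hx with rfl | hx
      · exact Finset.mem_sdiff.2 ⟨Finset.mem_univ _, hiJ⟩
      · rw [Finset.mem_singleton.1 hx]
        exact Finset.mem_sdiff.2 ⟨Finset.mem_univ _, hjJ⟩
    have h2 : ({i, j} : Finset (Fin (d + 1))).card = 2 := by
      rw [Finset.card_insert_of_notMem (by simpa using (Ne.symm hji)), Finset.card_singleton]
    have h3 := Finset.card_le_card hsub
    rw [h2, Finset.card_sdiff_of_subset (Finset.subset_univ J), Finset.card_univ, Fintype.card_fin] at h3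
    omega
  -- signs
  set ε : Fin (d + 1) → ℝ := fun j => if dpV d e j ∈ A then 1 else -1 with hε
  set ζ : Fin (d + 1) → ℤ := fun j => if dpV d e j ∈ A then 1 else -1 with hζ
  have hεone : ∀ j, dpV d e j ∈ A → ε j = 1 := fun j h => by
    simp only [hε]; rw [if_pos h]
  have hεmone : ∀ j, dpV d e j ∉ A → ε j = -1 := fun j h => by
    simp only [hε]; rw [if_neg h]
  have hζone : ∀ j, dpV d e j ∈ A → ζ j = 1 := fun j h => by
    simp only [hζ]; rw [if_pos h]
  have hζmone : ∀ j, dpV d e j ∉ A → ζ j = -1 := fun j h => by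
    simp only [hζ]; rw [if_neg h]
  have hεζ : ∀ j, ε j = (ζ j : ℝ) := by
    intro j
    by_cases h : dpV d e j ∈ A
    · rw [hεone j h, hζone j h]; norm_num
    · rw [hεmone j h, hζmone j h]; norm_num
  have hpm : ∀ j, ε j = 1 ∨ ε j = -1 := by
    intro j
    by_cases h : dpV d e j ∈ A
    · exact Or.inl (hεone j h)
    · exact Or.inr (hεmone j h)
  -- A as an image
  have hAimg : (A : Set (E d)) = (fun j => ε j • dpV d e j) '' {j | j ≠ i} := by
    apply Set.Subset.antisymm
    · intro a ha
      have haA : a ∈ A := ha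
      rcases hmemS a haA with ⟨j, rfl | rfl⟩
      · have hji : j ≠ i := by
          rintro rfl
          exact hiJ (Finset.mem_filter.2 ⟨Finset.mem_univ _, Or.inl haA⟩)
        refine ⟨j, hji, ?_⟩
        show ε j • dpV d e j = dpV d e j
        rw [hεone j haA, one_smul]
      · have hji : j ≠ i := by
          rintro rfl
          exact hiJ (Finset.mem_filter.2 ⟨Finset.mem_univ _, Or.inr haA⟩)
        have hnm : dpV d e j ∉ A := fun hcon => hnotboth j ⟨hcon, haA⟩
        refine ⟨j, hji, ?_⟩
        show ε j • dpV d e j = -dpV d e j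
        rw [hεmone j hnm]
        simp
    · rintro s ⟨j, hji, rfl⟩
      show ε j • dpV d e j ∈ A
      by_cases hwjA : dpV d e j ∈ A
      · rw [hεone j hwjA, one_smul]
        exact hwjA
      · have hj2 : -dpV d e j ∈ A :=
          ((Finset.mem_filter.1 (hJcov j hji)).2).resolve_left hwjA
        rw [hεmone j hwjA]
        simpa using hj2
  -- l values away from i
  have hlw : ∀ j, j ≠ i → l (dpV d e j) = ε j * m := by
    intro j hji
    by_cases hwjA : dpV d e j ∈ A
    · rw [hlA _ hwjA, hεone j hwjA, one_mul]
    · have hj2 : -dpV d e j ∈ A :=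
        ((Finset.mem_filter.1 (hJcov j hji)).2).resolve_left hwjA
      have hval := hlA _ hj2
      rw [map_neg] at hval
      rw [hεmone j hwjA]
      linarith
  -- strict bound at i
  have hlwi : |l (dpV d e i)| < m := by
    have h1 : l (dpV d e i) ≤ m := hub _ (mem_dpS.2 (Or.inl ⟨i, rfl⟩))
    have h2 : l (-dpV d e i) ≤ m := hub _ (mem_dpS.2 (Or.inr ⟨i, rfl⟩))
    rw [map_neg] at h2
    have hni : dpV d e i ∉ A := fun hcon =>
      hiJ (Finset.mem_filter.2 ⟨Finset.mem_univ _, Or.inl hcon⟩)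
    have hni' : -dpV d e i ∉ A := fun hcon =>
      hiJ (Finset.mem_filter.2 ⟨Finset.mem_univ _, Or.inr hcon⟩)
    have h3 : l (dpV d e i) ≠ m := by
      intro hcon
      exact hni (Finset.mem_filter.2 ⟨mem_dpS.2 (Or.inl ⟨i, rfl⟩), hcon⟩)
    have h4 : -l (dpV d e i) ≠ m := by
      intro hcon
      apply hni'
      refine Finset.mem_filter.2 ⟨mem_dpS.2 (Or.inr ⟨i, rfl⟩), ?_⟩
      rw [map_neg]
      exact hcon
    rw [abs_lt]
    constructor
    · rcases lt_or_eq_of_le h2 with h | h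
      · linarith
      · exact absurd h h4
    · exact lt_of_le_of_ne h1 h3
  -- the sum over j ≠ i
  have hsplit := Finset.add_sum_erase Finset.univ (fun j => l (dpV d e j)) (Finset.mem_univ i)
  have hsumerase : ∑ j ∈ Finset.univ.erase i, l (dpV d e j)
      = ((∑ j ∈ Finset.univ.erase i, ζ j : ℤ) : ℝ) * m := by
    rw [Finset.sum_congr rfl (fun j hj => by
      rw [hlw j (Finset.mem_erase.1 hj).1, hεζ j]), ← Finset.sum_mul]
    push_cast
    rfl
  have hli : l (dpV d e i) = -(((∑ j ∈ Finset.univ.erase i, ζ j : ℤ) : ℝ) * m) := by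
    rw [hsum0] at hsplit
    rw [← hsumerase]
    linarith
  have hζ0 : (∑ j ∈ Finset.univ.erase i, ζ j : ℤ) = 0 := by
    have h1 : |((∑ j ∈ Finset.univ.erase i, ζ j : ℤ) : ℝ)| * m < m := by
      have h0 : |((∑ j ∈ Finset.univ.erase i, ζ j : ℤ) : ℝ) * m| < m := by
        rw [← abs_neg, ← hli]
        exact hlwi
      calc |((∑ j ∈ Finset.univ.erase i, ζ j : ℤ) : ℝ)| * m
          = |((∑ j ∈ Finset.univ.erase i, ζ j : ℤ) : ℝ)| * |m| := by
            rw [abs_of_pos hmpos]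
        _ = |((∑ j ∈ Finset.univ.erase i, ζ j : ℤ) : ℝ) * m| := (abs_mul _ _).symm
        _ < m := h0
    have h2 : |((∑ j ∈ Finset.univ.erase i, ζ j : ℤ) : ℝ)| < 1 := by
      by_contra hcon
      push_neg at hcon
      nlinarith
    have h3 : |(∑ j ∈ Finset.univ.erase i, ζ j : ℤ)| < 1 := by
      have := h2
      rw [← Int.cast_abs] at this
      exact_mod_cast this
    rcases abs_lt.1 h3 with ⟨ha, hb⟩
    omega
  -- counting
  have hζpm : ∀ j ∈ Finset.univ.erase i, ζ j = 1 ∨ ζ j = -1 := by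
    intro j _
    by_cases h : dpV d e j ∈ A
    · exact Or.inl (hζone j h)
    · exact Or.inr (hζmone j h)
  have hcount := pm_sum (Finset.univ.erase i) ζ hζpm
  rw [hζ0] at hcount
  have hce : (Finset.univ.erase i).card = d := by
    rw [Finset.card_erase_of_mem (Finset.mem_univ i)]
    simp
  rw [hce] at hcount
  have hfiltEq : Finset.univ.filter (fun j : Fin (d + 1) => j ≠ i ∧ ε j = 1)
      = (Finset.univ.erase i).filter (fun j => ζ j = 1) := by
    ext j
    simp only [Finset.mem_filter, Finset.mem_erase, Finset.mem_univ, true_and, and_true]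
    constructor
    · rintro ⟨hji, hεj⟩
      refine ⟨hji, ?_⟩
      by_cases h : dpV d e j ∈ A
      · exact hζone j h
      · rw [hεmone j h] at hεj
        norm_num at hεj
    · rintro ⟨hji, hζj⟩
      refine ⟨hji, ?_⟩
      by_cases h : dpV d e j ∈ A
      · exact hεone j h
      · rw [hζmone j h] at hζj
        norm_num at hζj
  refine ⟨i, ε, hpm, ?_, ?_⟩
  · rw [hfiltEq]
    omega
  · rw [hFA, hAimg]

end DelPezzoAux
open DelPezzoAux in
theorem delPezzo_facets (d : ℕ) (hd : 0 < d) (hev : Even d)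
    (e : Fin d → Fin d → ℤ) (hbasis : IsUnit (Matrix.of e).det) :
    (∀ F, IsFacet (delPezzo d e) F ↔
      ∃ (i : Fin (d + 1)) (ε : Fin (d + 1) → ℝ),
        (∀ j, ε j = 1 ∨ ε j = -1) ∧
        (Finset.univ.filter (fun j : Fin (d + 1) => j ≠ i ∧ ε j = 1)).card = d / 2 ∧
        F = convexHull ℝ ((fun j => ε j • dpV d e j) '' {j | j ≠ i})) ∧
    {F | IsFacet (delPezzo d e) F}.ncard = (d + 1) * Nat.choose d (d / 2) := by
  classical
  have hv : LinearIndependent ℝ (eR d e) := eR_li d e hbasis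
  have hiff : ∀ F, IsFacet (delPezzo d e) F ↔
      ∃ (i : Fin (d + 1)) (ε : Fin (d + 1) → ℝ),
        (∀ j, ε j = 1 ∨ ε j = -1) ∧
        (Finset.univ.filter (fun j : Fin (d + 1) => j ≠ i ∧ ε j = 1)).card = d / 2 ∧
        F = convexHull ℝ ((fun j => ε j • dpV d e j) '' {j | j ≠ i}) := by
    intro F
    constructor
    · exact facet_forward hd hev e hv F
    · rintro ⟨i, ε, hpm, hcard, rfl⟩
      obtain ⟨l, _, hfac⟩ := isFacet_of_data hd hev e hv i ε hpm hcard
      exact hfac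
  refine ⟨hiff, ?_⟩
  -- counting
  set Φ : ((_ : Fin (d + 1)) × Finset (Fin (d + 1))) → Set (E d) := fun p =>
    convexHull ℝ ((fun j => (if j ∈ p.2 then (1 : ℝ) else -1) • dpV d e j) '' {j | j ≠ p.1})
    with hΦ
  set T : Finset ((_ : Fin (d + 1)) × Finset (Fin (d + 1))) :=
    Finset.univ.sigma (fun i => (Finset.univ.erase i).powersetCard (d / 2)) with hT
  have hmemT : ∀ p : (_ : Fin (d + 1)) × Finset (Fin (d + 1)),
      p ∈ T ↔ p.2 ⊆ Finset.univ.erase p.1 ∧ p.2.card = d / 2 := by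
    rintro ⟨i, t⟩
    simp [hT, Finset.mem_sigma, Finset.mem_powersetCard]
  -- filter identity for parameters
  have hfilt : ∀ (i : Fin (d + 1)) (t : Finset (Fin (d + 1))),
      (⟨i, t⟩ : (_ : Fin (d + 1)) × Finset (Fin (d + 1))) ∈ T →
      Finset.univ.filter
        (fun j : Fin (d + 1) => j ≠ i ∧ (if j ∈ t then (1 : ℝ) else -1) = 1) = t := by
    rintro i t hp
    obtain ⟨hsub, _⟩ := (hmemT _).1 hp
    ext j
    simp only [Finset.mem_filter, Finset.mem_univ, true_and]
    constructor
    · rintro ⟨hji, hj1⟩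
      by_cases h : j ∈ t
      · exact h
      · rw [if_neg h] at hj1
        norm_num at hj1
    · intro hj
      refine ⟨(Finset.mem_erase.1 (hsub hj)).1, if_pos hj⟩
  have hsetEq : {F | IsFacet (delPezzo d e) F} = Φ '' (T : Set ((_ : Fin (d + 1)) × Finset (Fin (d + 1)))) := by
    ext F
    simp only [Set.mem_setOf_eq, Set.mem_image, Finset.mem_coe]
    rw [hiff F]
    constructor
    · rintro ⟨i, ε, hpm, hcard, rfl⟩
      refine ⟨⟨i, Finset.univ.filter (fun j : Fin (d + 1) => j ≠ i ∧ ε j = 1)⟩, ?_, ?_⟩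
      · refine (hmemT _).2 ⟨?_, hcard⟩
        intro j hj
        exact Finset.mem_erase.2 ⟨(Finset.mem_filter.1 hj).2.1, Finset.mem_univ _⟩
      · show convexHull ℝ _ = convexHull ℝ _
        congr 1
        apply Set.image_congr
        intro j hj
        have hji : j ≠ i := hj
        rcases hpm j with h | h
        · rw [h, if_pos (Finset.mem_filter.2 ⟨Finset.mem_univ _, hji, h⟩)]
        · rw [h, if_neg ?_]
          intro hcon
          have := (Finset.mem_filter.1 hcon).2.2
          rw [h] at this
          norm_num at this
    · rintro ⟨⟨i, t⟩, hpT, rfl⟩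
      refine ⟨i, fun j => if j ∈ t then (1 : ℝ) else -1, ?_, ?_, rfl⟩
      · intro j
        by_cases h : j ∈ t
        · exact Or.inl (if_pos h)
        · exact Or.inr (if_neg h)
      · rw [hfilt _ _ hpT]
        exact ((hmemT _).1 hpT).2
  -- injectivity
  have hkey : ∀ p ∈ T, ∀ q ∈ T, Φ p = Φ q → p.1 = q.1 ∧ p.2 ⊆ q.2 := by
    rintro ⟨i, t⟩ hp ⟨i', t'⟩ hq hpq
    obtain ⟨hsub, hcard⟩ := (hmemT _).1 hp
    obtain ⟨hsub', hcard'⟩ := (hmemT _).1 hq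
    set ε' : Fin (d + 1) → ℝ := fun j => if j ∈ t' then (1 : ℝ) else -1 with hε'
    have hpm' : ∀ j, ε' j = 1 ∨ ε' j = -1 := by
      intro j
      by_cases h : j ∈ t'
      · exact Or.inl (by simp only [hε']; rw [if_pos h])
      · exact Or.inr (by simp only [hε']; rw [if_neg h])
    have hcard'' : (Finset.univ.filter (fun j : Fin (d + 1) => j ≠ i' ∧ ε' j = 1)).card
        = d / 2 := by
      show (Finset.univ.filter
        (fun j : Fin (d + 1) => j ≠ i' ∧ (if j ∈ t' then (1 : ℝ) else -1) = 1)).card = d / 2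
      rw [hfilt _ _ hq]
      exact hcard'
    obtain ⟨l', hl', _⟩ := isFacet_of_data hd hev e hv i' ε' hpm' hcard''
    have hval : ∀ x ∈ Φ (⟨i', t'⟩ : (_ : Fin (d + 1)) × Finset (Fin (d + 1))), l' x = 1 := by
      intro x hx
      have hsub2 : Φ (⟨i', t'⟩ : (_ : Fin (d + 1)) × Finset (Fin (d + 1))) ⊆ {z | l' z = 1} := by
        apply convexHull_min ?_ (convex_hyperplane ⟨map_add l', fun c y => map_smul l' c y⟩ 1)
        rintro z ⟨j, hji', rfl⟩
        show l' ((if j ∈ t' then (1 : ℝ) else -1) • dpV d e j) = 1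
        rw [_root_.map_smul, smul_eq_mul, hl' j, if_neg hji']
        by_cases h : j ∈ t' <;> simp [hε', h]
      exact hsub2 hx
    have hii : i = i' := by
      by_contra hne
      have hx : (if i' ∈ t then (1 : ℝ) else -1) • dpV d e i' ∈ Φ (⟨i, t⟩ : (_ : Fin (d + 1)) × Finset (Fin (d + 1))) :=
        subset_convexHull ℝ _ ⟨i', Ne.symm hne, rfl⟩
      rw [hpq] at hx
      have := hval _ hx
      rw [_root_.map_smul, smul_eq_mul, hl' i', if_pos rfl, mul_zero] at this
      norm_num at this
    refine ⟨hii, ?_⟩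
    intro j hjt
    have hji : j ≠ i := (Finset.mem_erase.1 (hsub hjt)).1
    have hx : dpV d e j ∈ Φ (⟨i, t⟩ : (_ : Fin (d + 1)) × Finset (Fin (d + 1))) := by
      apply subset_convexHull ℝ _
      refine ⟨j, hji, ?_⟩
      show (if j ∈ t then (1 : ℝ) else -1) • dpV d e j = dpV d e j
      rw [if_pos hjt, one_smul]
    rw [hpq] at hx
    have hlj := hval _ hx
    rw [hl' j] at hlj
    rw [hii] at hji
    rw [if_neg hji] at hlj
    by_cases h : j ∈ t'
    · exact h
    · exfalso
      rw [hε'] at hlj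
      simp only [if_neg h] at hlj
      norm_num at hlj
  have hinj : Set.InjOn Φ (T : Set ((_ : Fin (d + 1)) × Finset (Fin (d + 1)))) := by
    rintro p hp q hq hpq
    obtain ⟨h1, h2⟩ := hkey p hp q hq hpq
    obtain ⟨h1', h2'⟩ := hkey q hq p hp hpq.symm
    obtain ⟨i, t⟩ := p
    obtain ⟨i', t'⟩ := q
    cases h1
    exact congrArg (Sigma.mk i) (Finset.Subset.antisymm h2 h2')
  rw [hsetEq, Set.ncard_image_of_injOn hinj, Set.ncard_coe_finset, hT, Finset.card_sigma]
  have hterm : ∀ i : Fin (d + 1),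
      ((Finset.univ.erase i).powersetCard (d / 2)).card = Nat.choose d (d / 2) := by
    intro i
    rw [Finset.card_powersetCard, Finset.card_erase_of_mem (Finset.mem_univ i),
      Finset.card_univ, Fintype.card_fin]
    simp
  rw [Finset.sum_congr rfl (fun i _ => hterm i), Finset.sum_const, Finset.card_univ,
    Fintype.card_fin, smul_eq_mul]
end

section
/- Let P ⊆ M_ℝ be a reflexive polytope and let v, w be lattice points on the boundary of P. If v + w ≠ 0 and no facet of P contains both v and w, then v + w is a lattice point on the boundary of P. -/
open Pointwise Matrix

/-!
For a lattice point `z` of `P*` and lattice points `v, w ∈ P`, the values `⟨z, v⟩, ⟨z, w⟩` are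
integers `≥ -1`, and they cannot both equal `-1`: otherwise `v` and `w` would lie in the face of `P`
cut out by `z`, and every proper face of a full-dimensional polytope lies in a facet. Hence
`⟨z, v + w⟩ ≥ -1` on the lattice points of `P*`, whose convex hull is `P*` as `P` is reflexive, so
`v + w ∈ P** = P`. If `v + w` were interior, `⟨z, v + w⟩ > -1` would force `⟨z, v + w⟩ ≥ 0` on
`P*`, and then the whole ray through `v + w` would lie in `P** = P`, contradicting boundedness.
-/

open Module Filter Topology

section DotProduct

variable {n : Type*} [Fintype n]

lemma dotProduct_self_pos {u : n → ℝ} (hu : u ≠ 0) : 0 < u ⬝ᵥ u :=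
  lt_of_le_of_ne (Finset.sum_nonneg fun i _ => mul_self_nonneg (u i))
    (Ne.symm (dotProduct_self_eq_zero.not.2 hu))

lemma isLinearMap_dotProduct_right (u : n → ℝ) : IsLinearMap ℝ (u ⬝ᵥ ·) :=
  ⟨dotProduct_add u, fun c x => dotProduct_smul c u x⟩

lemma isLinearMap_dotProduct_left (x : n → ℝ) : IsLinearMap ℝ (· ⬝ᵥ x) :=
  ⟨fun a b => add_dotProduct a b x, fun c a => smul_dotProduct c a x⟩

lemma exists_dotProduct_eq_apply (f : Dual ℝ (n → ℝ)) : ∃ u : n → ℝ, ∀ y, f y = u ⬝ᵥ y := by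
  classical
  exact ⟨(dotProductEquiv ℝ n).symm f, fun y => by
    rw [← dotProductEquiv_apply_apply, LinearEquiv.apply_symm_apply]⟩

lemma exists_ne_zero_forall_dotProduct_eq_zero {V : Submodule ℝ (n → ℝ)} (hV : V ≠ ⊤) :
    ∃ w ≠ 0, ∀ x ∈ V, w ⬝ᵥ x = 0 := by
  obtain ⟨f, hf, hVf⟩ := V.exists_dual_map_eq_bot_of_lt_top hV.lt_top inferInstance
  obtain ⟨w, hw⟩ := exists_dotProduct_eq_apply f
  refine ⟨w, fun h => hf (LinearMap.ext fun y => by simp [hw, h]), fun x hx => ?_⟩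
  have : f x ∈ V.map f := Submodule.mem_map_of_mem hx
  rw [hVf, Submodule.mem_bot] at this
  rw [← hw, this]

lemma exists_dotProduct_lt_of_mem_interior {A : Set (n → ℝ)} {x u : n → ℝ}
    (hx : x ∈ interior A) (hu : u ≠ 0) : ∃ y ∈ A, u ⬝ᵥ y < u ⬝ᵥ x := by
  have hnear : ∀ᶠ t in 𝓝[>] (0 : ℝ), x - t • u ∈ interior A :=
    ((Continuous.tendsto' (by fun_prop) 0 x (by simp)).eventually
      (isOpen_interior.mem_nhds hx)).filter_mono nhdsWithin_le_nhds
  obtain ⟨t, ht, htpos⟩ := (hnear.and self_mem_nhdsWithin).exists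
  refine ⟨x - t • u, interior_subset ht, ?_⟩
  rw [dotProduct_sub, dotProduct_smul, smul_eq_mul]
  linarith [mul_pos (Set.mem_Ioi.1 htpos) (dotProduct_self_pos hu)]

lemma exists_dotProduct_ne_of_interior_convexHull {s : Set (n → ℝ)}
    (hs : (interior (convexHull ℝ s)).Nonempty) {u : n → ℝ} (hu : u ≠ 0) (c : ℝ) :
    ∃ x ∈ s, u ⬝ᵥ x ≠ c := by
  by_contra! h
  obtain ⟨x, hx⟩ := hs
  obtain ⟨y, hy, hlt⟩ := exists_dotProduct_lt_of_mem_interior hx hu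
  have hconst := convexHull_min h (convex_hyperplane (isLinearMap_dotProduct_right u) c)
  exact hlt.ne ((hconst hy).trans (hconst (interior_subset hx)).symm)

end DotProduct

lemma Finset.exists_nonneg_add_mul_eq_zero {ι : Type*} (S : Finset ι) (f g : ι → ℝ)
    (hf : ∀ i ∈ S, 0 ≤ f i) (hg : ∃ i ∈ S, g i < 0) :
    ∃ t : ℝ, (∀ i ∈ S, 0 ≤ f i + t * g i) ∧ ∃ i ∈ S, g i < 0 ∧ f i + t * g i = 0 := by
  obtain ⟨j, hj, hjmin⟩ := (S.filter (g · < 0)).exists_min_image (fun i => f i / -g i)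
    (let ⟨i, hi, hgi⟩ := hg; ⟨i, Finset.mem_filter.2 ⟨hi, hgi⟩⟩)
  obtain ⟨hjS, hgj⟩ := Finset.mem_filter.1 hj
  refine ⟨f j / -g j, fun i hi => ?_, j, hjS, hgj,
    by rw [div_neg, neg_mul, div_mul_cancel₀ _ hgj.ne, add_neg_cancel]⟩
  by_cases hgi : g i < 0
  · have := hjmin i (Finset.mem_filter.2 ⟨hi, hgi⟩)
    rw [le_div_iff₀ (neg_pos.2 hgi)] at this
    linarith
  · have : 0 ≤ f j / -g j := div_nonneg (hf j hjS) (neg_nonneg.2 hgj.le)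
    nlinarith [hf i hi]

section Minimizers

variable {d : ℕ}

lemma finrank_vectorSpan_lt {T : Set (E d)} {u : E d} (hu : u ≠ 0)
    (hT : ∀ x ∈ T, ∀ y ∈ T, u ⬝ᵥ x = u ⬝ᵥ y) : finrank ℝ (vectorSpan ℝ T) < d := by
  set K := LinearMap.ker (dotProductEquiv ℝ (Fin d) u)
  have hle : vectorSpan ℝ T ≤ K := Submodule.span_le.2 <| by
    rintro _ ⟨x, hx, y, hy, rfl⟩
    simp [K, dotProduct_sub, hT x hx y hy]
  have hK : K ≠ ⊤ := fun h => (dotProduct_self_pos hu).ne' <| by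
    have : u ∈ K := h ▸ Submodule.mem_top
    simpa [K] using this
  calc finrank ℝ (vectorSpan ℝ T) ≤ finrank ℝ K := Submodule.finrank_mono hle
    _ < finrank ℝ (E d) := Submodule.finrank_lt hK
    _ = d := finrank_fin_fun ℝ

noncomputable def minimizers (u : E d) (S : Finset (E d)) : Finset (E d) :=
  {s ∈ S | ∀ t ∈ S, u ⬝ᵥ s ≤ u ⬝ᵥ t}

variable {u w : E d} {S : Finset (E d)}

lemma mem_minimizers {s : E d} : s ∈ minimizers u S ↔ s ∈ S ∧ ∀ t ∈ S, u ⬝ᵥ s ≤ u ⬝ᵥ t :=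
  Finset.mem_filter

lemma minimizers_subset : minimizers u S ⊆ S := Finset.filter_subset _ _

lemma minimizers_nonempty (hS : S.Nonempty) : (minimizers u S).Nonempty :=
  let ⟨s, hs, hmin⟩ := S.exists_min_image (u ⬝ᵥ ·) hS
  ⟨s, mem_minimizers.2 ⟨hs, hmin⟩⟩

lemma dotProduct_eq_of_mem_minimizers {s t : E d} (hs : s ∈ minimizers u S)
    (ht : t ∈ minimizers u S) : u ⬝ᵥ s = u ⬝ᵥ t :=
  le_antisymm ((mem_minimizers.1 hs).2 t (minimizers_subset ht))
    ((mem_minimizers.1 ht).2 s (minimizers_subset hs))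

lemma mem_convexHull_minimizers {x : E d} (hx : x ∈ convexHull ℝ (S : Set (E d)))
    (hmin : ∀ s ∈ S, u ⬝ᵥ x ≤ u ⬝ᵥ s) : x ∈ convexHull ℝ (minimizers u S : Set (E d)) := by
  obtain ⟨c, hc0, hc1, rfl⟩ := Finset.mem_convexHull'.1 hx
  -- a weighted average of the values `u ⬝ᵥ s - u ⬝ᵥ x ≥ 0` vanishes, so non-minimizers get weight 0
  have hsum : ∑ s ∈ S, c s * (u ⬝ᵥ s - u ⬝ᵥ ∑ t ∈ S, c t • t) = 0 := by
    simp only [mul_sub, Finset.sum_sub_distrib, ← Finset.sum_mul, hc1, one_mul, dotProduct_sum,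
      dotProduct_smul, smul_eq_mul, sub_self]
  have hzero : ∀ s ∈ S, s ∉ minimizers u S → c s = 0 := by
    intro s hs hsT
    have := (Finset.sum_eq_zero_iff_of_nonneg fun t ht =>
      mul_nonneg (hc0 t ht) (sub_nonneg.2 (hmin t ht))).1 hsum s hs
    refine (mul_eq_zero.1 this).resolve_right fun h => hsT (mem_minimizers.2 ⟨hs, fun t ht => ?_⟩)
    linarith [hmin t ht, sub_eq_zero.1 h]
  refine Finset.mem_convexHull'.2 ⟨c, fun s hs => hc0 s (minimizers_subset hs), ?_, ?_⟩
  · rw [← hc1]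
    exact Finset.sum_subset minimizers_subset hzero
  · exact Finset.sum_subset minimizers_subset fun s hs hsT => by rw [hzero s hs hsT, zero_smul]

lemma convexHull_minimizers : convexHull ℝ (minimizers u S : Set (E d)) =
    {x ∈ convexHull ℝ (S : Set (E d)) | ∀ y ∈ convexHull ℝ (S : Set (E d)), u ⬝ᵥ x ≤ u ⬝ᵥ y} := by
  refine Set.Subset.antisymm (fun x hx => ⟨convexHull_mono (by exact_mod_cast minimizers_subset) hx,
    fun y hy => ?_⟩) fun x ⟨hx, hmin⟩ =>
    mem_convexHull_minimizers hx fun s hs => hmin s (subset_convexHull ℝ _ hs)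
  obtain ⟨s₀, hs₀⟩ : (minimizers u S).Nonempty := by
    simpa using convexHull_nonempty_iff.1 ⟨x, hx⟩
  have hx' : u ⬝ᵥ x = u ⬝ᵥ s₀ := convexHull_min (fun s hs => dotProduct_eq_of_mem_minimizers hs hs₀)
    (convex_hyperplane (isLinearMap_dotProduct_right u) _) hx
  have hy' : u ⬝ᵥ s₀ ≤ u ⬝ᵥ y := convexHull_min (fun s hs => (mem_minimizers.1 hs₀).2 s hs)
    (convex_halfSpace_ge (isLinearMap_dotProduct_right u) _) hy
  linarith

lemma minimizers_ssubset_add_smul {s₀ : E d} (hs₀ : s₀ ∈ minimizers u S)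
    (hwT : ∀ s ∈ minimizers u S, w ⬝ᵥ s = w ⬝ᵥ s₀) (hw : ∃ s ∈ S, w ⬝ᵥ s < w ⬝ᵥ s₀) :
    ∃ t : ℝ, minimizers u S ⊂ minimizers (u + t • w) S := by
  obtain ⟨t, hnonneg, s₁, hs₁, hlt, heq⟩ := S.exists_nonneg_add_mul_eq_zero
    (fun s => u ⬝ᵥ s - u ⬝ᵥ s₀) (fun s => w ⬝ᵥ s - w ⬝ᵥ s₀)
    (fun s hs => sub_nonneg.2 ((mem_minimizers.1 hs₀).2 s hs))
    (let ⟨s, hs, h⟩ := hw; ⟨s, hs, sub_neg.2 h⟩)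
  have hmem : ∀ s ∈ S, u ⬝ᵥ s - u ⬝ᵥ s₀ + t * (w ⬝ᵥ s - w ⬝ᵥ s₀) = 0 →
      s ∈ minimizers (u + t • w) S := by
    intro s hs h0
    refine mem_minimizers.2 ⟨hs, fun s' hs' => ?_⟩
    simp only [add_dotProduct, smul_dotProduct, smul_eq_mul]
    linarith [hnonneg s' hs']
  refine ⟨t, (Finset.ssubset_iff_of_subset fun s hs => hmem s (minimizers_subset hs) ?_).2
    ⟨s₁, hmem s₁ hs₁ heq, fun h => ?_⟩⟩
  · rw [dotProduct_eq_of_mem_minimizers hs hs₀, hwT s hs]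
    ring
  · linarith [hwT s₁ h]

/-- Tilt `u` towards a direction `w ⊥ u` that is constant on the face but not on `S`, until a new
vertex becomes minimal. -/
lemma exists_minimizers_ssubset (hS : (interior (convexHull ℝ (S : Set (E d)))).Nonempty)
    (hu : u ≠ 0) (hrank : finrank ℝ (vectorSpan ℝ (minimizers u S : Set (E d))) < d - 1) :
    ∃ u' ≠ 0, minimizers u S ⊂ minimizers u' S := by
  obtain ⟨s₀, hs₀⟩ := minimizers_nonempty (u := u) (by simpa using hS.mono interior_subset)
  set T := minimizers u S
  have hV : vectorSpan ℝ (T : Set (E d)) ⊔ Submodule.span ℝ {u} ≠ ⊤ := fun h => by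
    have := Submodule.finrank_add_le_finrank_add_finrank (vectorSpan ℝ (T : Set (E d)))
      (Submodule.span ℝ {u})
    rw [h, finrank_top, finrank_fin_fun, finrank_span_singleton hu] at this
    omega
  obtain ⟨w, hw0, hw⟩ := exists_ne_zero_forall_dotProduct_eq_zero hV
  have hwu : w ⬝ᵥ u = 0 := hw u (Submodule.mem_sup_right (Submodule.mem_span_singleton_self u))
  have hwT : ∀ s ∈ T, w ⬝ᵥ s = w ⬝ᵥ s₀ := fun s hs => by
    have := hw _ (Submodule.mem_sup_left (vsub_mem_vectorSpan ℝ (Finset.mem_coe.2 hs)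
      (Finset.mem_coe.2 hs₀)))
    rw [vsub_eq_sub, dotProduct_sub] at this
    linarith
  obtain ⟨s₁, hs₁, hne⟩ := exists_dotProduct_ne_of_interior_convexHull hS hw0 (w ⬝ᵥ s₀)
  obtain ⟨w', hw'u, hw'T, hw'⟩ : ∃ w' : E d, w' ⬝ᵥ u = 0 ∧ (∀ s ∈ T, w' ⬝ᵥ s = w' ⬝ᵥ s₀) ∧
      ∃ s ∈ S, w' ⬝ᵥ s < w' ⬝ᵥ s₀ := by
    rcases hne.lt_or_gt with h | h
    · exact ⟨w, hwu, hwT, s₁, hs₁, h⟩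
    · exact ⟨-w, by simp [hwu], fun s hs => by simp [hwT s hs], s₁, hs₁, by simpa using h⟩
  obtain ⟨t, hss⟩ := minimizers_ssubset_add_smul hs₀ hw'T hw'
  refine ⟨u + t • w', fun h => (dotProduct_self_pos hu).ne' ?_, hss⟩
  simpa [add_dotProduct, hw'u] using congrArg (· ⬝ᵥ u) h

lemma exists_minimizers_subset_finrank_eq
    (hS : (interior (convexHull ℝ (S : Set (E d)))).Nonempty) (hu : u ≠ 0) :
    ∃ u', minimizers u S ⊆ minimizers u' S ∧
      finrank ℝ (vectorSpan ℝ (minimizers u' S : Set (E d))) = d - 1 := by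
  induction hk : S.card - (minimizers u S).card using Nat.strong_induction_on generalizing u with
  | _ k ih =>
  have hlt := finrank_vectorSpan_lt (T := (minimizers u S : Set (E d))) hu fun x hx y hy =>
    dotProduct_eq_of_mem_minimizers (Finset.mem_coe.1 hx) (Finset.mem_coe.1 hy)
  rcases Nat.lt_or_ge (finrank ℝ (vectorSpan ℝ (minimizers u S : Set (E d)))) (d - 1) with h | h
  · obtain ⟨u₂, hu₂, hss⟩ := exists_minimizers_ssubset hS hu h
    have := Finset.card_lt_card hss
    have := Finset.card_le_card (minimizers_subset (u := u₂) (S := S))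
    obtain ⟨u', hsub, hrank⟩ := ih _ (by omega) hu₂ rfl
    exact ⟨u', hss.subset.trans hsub, hrank⟩
  · exact ⟨u, subset_rfl, by omega⟩

lemma exists_isFacet_of_forall_dotProduct_le
    (hS : (interior (convexHull ℝ (S : Set (E d)))).Nonempty) (hu : u ≠ 0) :
    ∃ F, IsFacet (convexHull ℝ (S : Set (E d))) F ∧ ∀ x ∈ convexHull ℝ (S : Set (E d)),
      (∀ y ∈ convexHull ℝ (S : Set (E d)), u ⬝ᵥ x ≤ u ⬝ᵥ y) → x ∈ F := by
  obtain ⟨u', hsub, hrank⟩ := exists_minimizers_subset_finrank_eq hS hu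
  refine ⟨convexHull ℝ (minimizers u' S : Set (E d)), ⟨fun _ =>
    ⟨LinearMap.toContinuousLinearMap (dotProductEquiv ℝ (Fin d) (-u')), ?_⟩, ?_, ?_⟩,
    fun x hx hmin => ?_⟩
  · rw [convexHull_minimizers]
    simp
  · simpa using minimizers_nonempty (u := u') (by simpa using hS.mono interior_subset)
  · rwa [affineSpan_convexHull, direction_affineSpan]
  · refine convexHull_mono (by exact_mod_cast hsub) ?_
    rw [convexHull_minimizers]
    exact ⟨hx, hmin⟩

end Minimizers

section Polar

variable {d : ℕ} {P : Set (E d)}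

lemma IsLatticePt.add {x y : E d} (hx : IsLatticePt x) (hy : IsLatticePt y) :
    IsLatticePt (x + y) := fun i =>
  let ⟨a, ha⟩ := hx i
  let ⟨b, hb⟩ := hy i
  ⟨a + b, by simp [ha, hb]⟩

lemma IsLatticePt.exists_dotProduct_eq_intCast {x y : E d} (hx : IsLatticePt x)
    (hy : IsLatticePt y) : ∃ m : ℤ, x ⬝ᵥ y = m := by
  choose a ha using hx
  choose b hb using hy
  exact ⟨∑ i, a i * b i, by simp [dotProduct, ha, hb]⟩

lemma mem_polarDual {z : E d} : z ∈ polarDual P ↔ ∀ y ∈ P, -1 ≤ z ⬝ᵥ y := Iff.rfl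

lemma mem_of_forall_mem_polarDual (hPc : IsClosed P) (hPconv : Convex ℝ P) (h0 : 0 ∈ P)
    {x : E d} (hx : ∀ z ∈ polarDual P, -1 ≤ z ⬝ᵥ x) : x ∈ P := by
  by_contra hxP
  obtain ⟨f, c, hfP, hfx⟩ := geometric_hahn_banach_closed_point hPconv hPc hxP
  obtain ⟨a, ha⟩ := exists_dotProduct_eq_apply (f : Dual ℝ (E d))
  simp only [ContinuousLinearMap.coe_coe] at ha
  have hc : 0 < c := by simpa using hfP 0 h0
  have hz : -c⁻¹ • a ∈ polarDual P := mem_polarDual.2 fun y hy => by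
    have : c⁻¹ * (a ⬝ᵥ y) < 1 := by rw [inv_mul_lt_iff₀ hc, mul_one, ← ha]; exact hfP y hy
    rw [smul_dotProduct, smul_eq_mul, neg_mul]
    linarith
  have : 1 < c⁻¹ * (a ⬝ᵥ x) := by rw [lt_inv_mul_iff₀ hc, mul_one, ← ha]; exact hfx
  have := hx _ hz
  rw [smul_dotProduct, smul_eq_mul, neg_mul] at this
  linarith

lemma neg_one_lt_dotProduct_of_mem_interior {x z : E d} (hx : x ∈ interior P)
    (hz : z ∈ polarDual P) : -1 < z ⬝ᵥ x := by
  rcases eq_or_ne z 0 with rfl | hz0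
  · simp
  obtain ⟨y, hy, hlt⟩ := exists_dotProduct_lt_of_mem_interior hx hz0
  linarith [mem_polarDual.1 hz y hy]

lemma le_dotProduct_of_forall_isLatticePt
    (hdual : polarDual P = convexHull ℝ {z | z ∈ polarDual P ∧ IsLatticePt z}) {x : E d} {c : ℝ}
    (h : ∀ z ∈ polarDual P, IsLatticePt z → c ≤ z ⬝ᵥ x) {z : E d} (hz : z ∈ polarDual P) :
    c ≤ z ⬝ᵥ x := by
  rw [hdual] at hz
  exact convexHull_min (fun z hz => h z hz.1 hz.2)
    (convex_halfSpace_ge (isLinearMap_dotProduct_left x) c) hz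

lemma neg_one_le_dotProduct_add {S : Finset (E d)}
    (hS : (interior (convexHull ℝ (S : Set (E d)))).Nonempty) {z v w : E d}
    (hz : z ∈ polarDual (convexHull ℝ (S : Set (E d)))) (hzl : IsLatticePt z)
    (hv : IsLatticePt v) (hw : IsLatticePt w)
    (hvP : v ∈ convexHull ℝ (S : Set (E d))) (hwP : w ∈ convexHull ℝ (S : Set (E d)))
    (hfac : ∀ F, IsFacet (convexHull ℝ (S : Set (E d))) F → ¬(v ∈ F ∧ w ∈ F)) :
    -1 ≤ z ⬝ᵥ (v + w) := by
  obtain ⟨a, ha⟩ := hzl.exists_dotProduct_eq_intCast hv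
  obtain ⟨b, hb⟩ := hzl.exists_dotProduct_eq_intCast hw
  have ha1 : -1 ≤ a := by exact_mod_cast ha ▸ mem_polarDual.1 hz v hvP
  have hb1 : -1 ≤ b := by exact_mod_cast hb ▸ mem_polarDual.1 hz w hwP
  rw [dotProduct_add, ha, hb]
  by_contra! hlt
  have hab : a = -1 ∧ b = -1 := by
    have : a + b < -1 := by exact_mod_cast hlt
    omega
  have hz0 : z ≠ 0 := by
    rintro rfl
    have : (a : ℝ) = 0 := by rw [← ha, zero_dotProduct]
    simp [hab.1] at this
  obtain ⟨F, hF, hFmin⟩ := exists_isFacet_of_forall_dotProduct_le hS hz0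
  refine hfac F hF ⟨hFmin v hvP fun y hy => ?_, hFmin w hwP fun y hy => ?_⟩
  · rw [ha, hab.1]
    exact_mod_cast mem_polarDual.1 hz y hy
  · rw [hb, hab.2]
    exact_mod_cast mem_polarDual.1 hz y hy

lemma notMem_interior_of_isLatticePt (hPb : Bornology.IsBounded P) (hPc : IsClosed P)
    (hPconv : Convex ℝ P) (h0 : 0 ∈ P)
    (hdual : polarDual P = convexHull ℝ {z | z ∈ polarDual P ∧ IsLatticePt z})
    {x : E d} (hx : IsLatticePt x) (hx0 : x ≠ 0) : x ∉ interior P := by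
  intro hint
  have hnonneg : ∀ z ∈ polarDual P, 0 ≤ z ⬝ᵥ x :=
    fun z => le_dotProduct_of_forall_isLatticePt hdual fun z hz hzl => by
      obtain ⟨m, hm⟩ := hzl.exists_dotProduct_eq_intCast hx
      have : -1 < z ⬝ᵥ x := neg_one_lt_dotProduct_of_mem_interior hint hz
      rw [hm] at this ⊢
      have : -1 < m := by exact_mod_cast this
      exact_mod_cast (by omega : 0 ≤ m)
  have hray : ∀ t : ℝ, 0 ≤ t → t • x ∈ P := fun t ht =>
    mem_of_forall_mem_polarDual hPc hPconv h0 fun z hz => by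
      rw [dotProduct_smul, smul_eq_mul]
      nlinarith [hnonneg z hz]
  obtain ⟨R, hR⟩ := hPb.exists_norm_le
  have hxpos : 0 < ‖x‖ := norm_pos_iff.2 hx0
  have hR0 : 0 ≤ R := (norm_nonneg _).trans (hR 0 h0)
  have := hR _ (hray ((R + 1) / ‖x‖) (by positivity))
  rw [norm_smul, Real.norm_of_nonneg (by positivity), div_mul_cancel₀ _ hxpos.ne'] at this
  linarith

end Polar

theorem reflexive_boundary_sum (d : ℕ) (P : Set (E d)) (hP : IsReflexive P)
    (v w : E d) (hv : IsLatticePt v) (hw : IsLatticePt w)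
    (hvb : v ∈ frontier P) (hwb : w ∈ frontier P)
    (hne : v + w ≠ 0)
    (hfac : ∀ F, IsFacet P F → ¬(v ∈ F ∧ w ∈ F)) :
    v + w ∈ frontier P ∧ IsLatticePt (v + w) := by
  obtain ⟨⟨S, -, rfl⟩, h0, hdual⟩ := hP
  have hPc : IsCompact (convexHull ℝ (S : Set (E d))) :=
    S.finite_toSet.isCompact_convexHull (𝕜 := ℝ)
  have hPconv := convex_convexHull ℝ (S : Set (E d))
  have h0P := interior_subset h0
  have hvw : IsLatticePt (v + w) := hv.add hw
  have hvwP : v + w ∈ convexHull ℝ (S : Set (E d)) :=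
    mem_of_forall_mem_polarDual hPc.isClosed hPconv h0P fun _ =>
      le_dotProduct_of_forall_isLatticePt hdual fun _ hz hzl =>
        neg_one_le_dotProduct_add ⟨0, h0⟩ hz hzl hv hw (hPc.isClosed.frontier_subset hvb)
          (hPc.isClosed.frontier_subset hwb) hfac
  rw [hPc.isClosed.frontier_eq]
  exact ⟨⟨hvwP, notMem_interior_of_isLatticePt hPc.isBounded hPc.isClosed hPconv h0P hdual
    hvw hne⟩, hvw⟩
end

section
/- Let P ⊆ M_ℝ be a reflexive polytope, F a facet of P with inner normal η_F, and m a lattice point on the boundary of P with η_F(m) = 0. Then m is contained in some facet of P that intersects F in a face of codimension two. -/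
open Pointwise Matrix

/-!
Let `w` be a relative interior point of `F`. As `⟨η, m⟩ = 0`, the ray `w + t • m` stays in the
hyperplane spanned by `F`; let `y` be the point where it leaves `F` and `R` a ridge of `F` through
`y`. Projecting points of that hyperplane just outside `F` radially onto the boundary of `P` shows
that a second facet `G` contains a relative interior point of `R`, hence all of `R`. The normal `u`
of `G` is a vertex of `P*`, hence a lattice point, and `⟨u, y⟩ = -1 < ⟨u, w⟩`. So `⟨u, m⟩` is a
negative integer `≥ -1`, i.e. `m ∈ G`; and `F ∩ G ⊇ R` has codimension two since `u ≠ η`.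
-/

open Set Module

section Dot

variable {d : ℕ}

lemma dot_comm (x y : E d) : dot x y = dot y x := dotProduct_comm x y

lemma dot_add_right (c x y : E d) : dot c (x + y) = dot c x + dot c y := dotProduct_add c x y

lemma dot_sub_right (c x y : E d) : dot c (x - y) = dot c x - dot c y := dotProduct_sub c x y

lemma dot_smul_right (c : E d) (a : ℝ) (x : E d) : dot c (a • x) = a * dot c x :=
  dotProduct_smul a c x

lemma dot_add_left (u v x : E d) : dot (u + v) x = dot u x + dot v x := add_dotProduct u v x

lemma dot_sub_left (u v x : E d) : dot (u - v) x = dot u x - dot v x := sub_dotProduct u v x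

lemma dot_smul_left (a : ℝ) (u x : E d) : dot (a • u) x = a * dot u x := smul_dotProduct a u x

lemma dot_neg_left (u x : E d) : dot (-u) x = -dot u x := neg_dotProduct u x

lemma dot_self_eq_zero {x : E d} : dot x x = 0 ↔ x = 0 := dotProduct_self_eq_zero

noncomputable def dotL (c : E d) : Module.Dual ℝ (E d) := dotProductEquiv ℝ (Fin d) c

@[simp] lemma dotL_apply (c x : E d) : dotL c x = dot c x := rfl

noncomputable def dotCLM (c : E d) : E d →L[ℝ] ℝ := LinearMap.toContinuousLinearMap (dotL c)

@[simp] lemma dotCLM_apply (c x : E d) : dotCLM c x = dot c x := rfl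

lemma exists_dot_eq (l : Module.Dual ℝ (E d)) : ∃ c : E d, ∀ x, dot c x = l x :=
  ⟨(dotProductEquiv ℝ (Fin d)).symm l, fun x => by
    rw [← dotL_apply, dotL, LinearEquiv.apply_symm_apply]⟩

lemma IsLatticePt.exists_dot_eq_intCast {u m : E d} (hu : IsLatticePt u) (hm : IsLatticePt m) :
    ∃ k : ℤ, dot u m = k := by
  choose a ha using hu
  choose b hb using hm
  exact ⟨∑ i, a i * b i, by simp [dot, ha, hb]⟩

lemma dot_eq_neg_one_of_neg {u m : E d} (hu : IsLatticePt u) (hm : IsLatticePt m)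
    (h₁ : -1 ≤ dot u m) (h₀ : dot u m < 0) : dot u m = -1 := by
  obtain ⟨k, hk⟩ := hu.exists_dot_eq_intCast hm
  rw [hk] at h₁ h₀ ⊢
  have h₁' : (-1 : ℤ) ≤ k := by exact_mod_cast h₁
  have h₀' : k < 0 := by exact_mod_cast h₀
  rw [show k = -1 by omega, Int.cast_neg, Int.cast_one]

end Dot

section LevelSets

variable {V : Type*} [AddCommGroup V] [Module ℝ V] {s : Set V} {f : V →ₗ[ℝ] ℝ} {β : ℝ}

lemma vectorSpan_le_ker_of_forall_eq (h : ∀ x ∈ s, f x = β) :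
    vectorSpan ℝ s ≤ LinearMap.ker f := by
  rw [vectorSpan_def, Submodule.span_le]
  rintro _ ⟨x, hx, y, hy, rfl⟩
  simp [h x hx, h y hy]

lemma apply_eq_of_mem_affineSpan (h : ∀ x ∈ s, f x = β) {x : V} (hx : x ∈ affineSpan ℝ s) :
    f x = β := by
  obtain ⟨y, hy⟩ := (affineSpan_nonempty ℝ).1 ⟨x, hx⟩
  have hxy : x - y ∈ vectorSpan ℝ s := by
    rw [← direction_affineSpan]
    exact AffineSubspace.vsub_mem_direction hx (subset_affineSpan ℝ s hy)
  have := vectorSpan_le_ker_of_forall_eq h hxy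
  rwa [LinearMap.mem_ker, map_sub, h y hy, sub_eq_zero] at this

end LevelSets

section Hyperplanes

variable {d : ℕ} {s : Set (E d)} {u v : E d}

lemma ne_zero_of_dot_eq_neg_one {x : E d} (h : dot u x = -1) : u ≠ 0 := by
  rintro rfl
  simp [dot] at h

lemma finrank_ker_dotL (hu : u ≠ 0) : finrank ℝ (LinearMap.ker (dotL u)) = d - 1 := by
  have hsurj : LinearMap.range (dotL u) = ⊤ := by
    refine LinearMap.range_eq_top.2 fun r => ⟨(r / dot u u) • u, ?_⟩
    have : dot u u ≠ 0 := mt dot_self_eq_zero.1 hu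
    simp [this]
  have := LinearMap.finrank_range_add_finrank_ker (dotL u)
  rw [hsurj, finrank_top, finrank_self, finrank_fin_fun] at this
  omega

lemma eq_zero_of_ker_le_ker_dotL {w x₀ : E d} (hux₀ : dot u x₀ ≠ 0) (hwx₀ : dot w x₀ = 0)
    (hker : LinearMap.ker (dotL u) ≤ LinearMap.ker (dotL w)) : w = 0 := by
  suffices h : ∀ x, dot w x = 0 from dot_self_eq_zero.1 (h w)
  intro x
  have hmem : x - (dot u x / dot u x₀) • x₀ ∈ LinearMap.ker (dotL u) := by
    simp [dot_sub_right, dot_smul_right, hux₀]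
  have := hker hmem
  simpa [dot_sub_right, dot_smul_right, hwx₀] using this

section SpanningSet

variable (hs : s.Nonempty) (hdim : finrank ℝ (vectorSpan ℝ s) = d - 1)
  (hu : ∀ x ∈ s, dot u x = -1)
include hs hdim hu

lemma vectorSpan_eq_ker_dotL : vectorSpan ℝ s = LinearMap.ker (dotL u) := by
  obtain ⟨x₀, hx₀⟩ := hs
  refine Submodule.eq_of_le_of_finrank_le (vectorSpan_le_ker_of_forall_eq hu) ?_
  rw [finrank_ker_dotL (ne_zero_of_dot_eq_neg_one (hu x₀ hx₀)), hdim]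

lemma mem_affineSpan_iff_dot_eq {x : E d} : x ∈ affineSpan ℝ s ↔ dot u x = -1 := by
  refine ⟨apply_eq_of_mem_affineSpan (f := dotL u) hu, fun hx => ?_⟩
  obtain ⟨x₀, hx₀⟩ := hs
  have hdir : x - x₀ ∈ (affineSpan ℝ s).direction := by
    rw [direction_affineSpan, vectorSpan_eq_ker_dotL ⟨x₀, hx₀⟩ hdim hu]
    simp [dot_sub_right, hx, hu x₀ hx₀]
  simpa using AffineSubspace.vadd_mem_of_mem_direction hdir (subset_affineSpan ℝ s hx₀)

lemma eq_of_forall_dot_eq_neg_one (hv : ∀ x ∈ s, dot v x = -1) : v = u := by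
  obtain ⟨x₀, hx₀⟩ := hs
  refine sub_eq_zero.1 (eq_zero_of_ker_le_ker_dotL (u := u) (x₀ := x₀) ?_ ?_ ?_)
  · simp [hu x₀ hx₀]
  · simp [dot_sub_left, hu x₀ hx₀, hv x₀ hx₀]
  · rw [← vectorSpan_eq_ker_dotL ⟨x₀, hx₀⟩ hdim hu]
    exact vectorSpan_le_ker_of_forall_eq (β := 0) fun x hx => by
      simp [dot_sub_left, hu x hx, hv x hx]

end SpanningSet

lemma finrank_vectorSpan_le_sub_two (huv : u ≠ v) (hs : s.Nonempty)
    (hu : ∀ x ∈ s, dot u x = -1) (hv : ∀ x ∈ s, dot v x = -1) :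
    finrank ℝ (vectorSpan ℝ s) ≤ d - 2 := by
  obtain ⟨x₀, hx₀⟩ := hs
  have hle : finrank ℝ (vectorSpan ℝ s) ≤ d - 1 := by
    rw [← finrank_ker_dotL (ne_zero_of_dot_eq_neg_one (hu x₀ hx₀))]
    exact Submodule.finrank_mono (vectorSpan_le_ker_of_forall_eq hu)
  by_contra h
  exact huv (eq_of_forall_dot_eq_neg_one ⟨x₀, hx₀⟩ (by omega) hv hu)

end Hyperplanes

section IntrinsicInterior

variable {V : Type*} [NormedAddCommGroup V] [NormedSpace ℝ V] {s : Set V} {x : V}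

lemma mem_intrinsicInterior_iff_dist :
    x ∈ intrinsicInterior ℝ s ↔
      x ∈ affineSpan ℝ s ∧ ∃ ε > 0, ∀ y ∈ affineSpan ℝ s, dist y x < ε → y ∈ s := by
  constructor
  · rintro ⟨z, hz, rfl⟩
    obtain ⟨ε, hε, hball⟩ := Metric.mem_nhds_iff.1 (mem_interior_iff_mem_nhds.1 hz)
    exact ⟨z.2, ε, hε, fun y hy hyz => hball (show (⟨y, hy⟩ : affineSpan ℝ s) ∈ _ from hyz)⟩
  · rintro ⟨hx, ε, hε, hball⟩
    refine ⟨⟨x, hx⟩, mem_interior_iff_mem_nhds.2 (Metric.mem_nhds_iff.2 ⟨ε, hε, ?_⟩), rfl⟩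
    exact fun z hz => hball z z.2 hz

lemma intrinsicInterior_subset_interior (hs : affineSpan ℝ s = ⊤) :
    intrinsicInterior ℝ s ⊆ interior s := by
  intro x hx
  obtain ⟨-, ε, hε, hball⟩ := mem_intrinsicInterior_iff_dist.1 hx
  exact mem_interior_iff_mem_nhds.2 (Metric.mem_nhds_iff.2
    ⟨ε, hε, fun y hy => hball y (hs ▸ AffineSubspace.mem_top ℝ V y) hy⟩)

lemma mem_interior_setOf_add_mem_iff {y : V} (hy : y ∈ affineSpan ℝ s)
    (w : (affineSpan ℝ s).direction) :
    w ∈ interior {w : (affineSpan ℝ s).direction | y + w ∈ s} ↔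
      y + w ∈ intrinsicInterior ℝ s := by
  have hadd : ∀ v : (affineSpan ℝ s).direction, y + v ∈ affineSpan ℝ s := fun v => by
    simpa [vadd_eq_add, add_comm] using AffineSubspace.vadd_mem_of_mem_direction v.2 hy
  rw [mem_interior_iff_mem_nhds, Metric.mem_nhds_iff, mem_intrinsicInterior_iff_dist]
  constructor
  · rintro ⟨ε, hε, hball⟩
    refine ⟨hadd w, ε, hε, fun x hx hxw => ?_⟩
    have hxy : x - y ∈ (affineSpan ℝ s).direction := by
      simpa using AffineSubspace.vsub_mem_direction hx hy
    have := hball (show (⟨x - y, hxy⟩ : (affineSpan ℝ s).direction) ∈ Metric.ball w ε by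
      rw [Metric.mem_ball, Subtype.dist_eq, dist_eq_norm]
      rw [dist_eq_norm] at hxw
      simpa [sub_add_eq_sub_sub] using hxw)
    simpa using this
  · rintro ⟨-, ε, hε, hball⟩
    refine ⟨ε, hε, fun v hv => hball _ (hadd v) ?_⟩
    rw [Metric.mem_ball, Subtype.dist_eq] at hv
    simpa [dist_eq_norm, sub_add_eq_sub_sub] using hv

lemma exists_pos_add_smul_mem (hx : x ∈ intrinsicInterior ℝ s) {v : V}
    (hv : v ∈ (affineSpan ℝ s).direction) : ∃ ε : ℝ, 0 < ε ∧ x + ε • v ∈ s := by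
  obtain ⟨hxs, ε, hε, hball⟩ := mem_intrinsicInterior_iff_dist.1 hx
  refine ⟨ε / (2 * (‖v‖ + 1)), by positivity, hball _ ?_ ?_⟩
  · simpa [vadd_eq_add, add_comm] using AffineSubspace.vadd_mem_of_mem_direction
      (Submodule.smul_mem _ (ε / (2 * (‖v‖ + 1))) hv) hxs
  · rw [dist_eq_norm, add_sub_cancel_left, norm_smul, Real.norm_of_nonneg (by positivity),
      div_mul_eq_mul_div, div_lt_iff₀ (by positivity)]
    nlinarith [norm_nonneg v]

lemma forall_apply_eq_of_forall_le_of_mem_intrinsicInterior {f : V →ₗ[ℝ] ℝ}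
    (hmax : ∀ y ∈ s, f y ≤ f x) (hx : x ∈ intrinsicInterior ℝ s) : ∀ y ∈ s, f y = f x := by
  intro y hy
  have hdir : x - y ∈ (affineSpan ℝ s).direction := by
    simpa using AffineSubspace.vsub_mem_direction
      (subset_affineSpan ℝ s (intrinsicInterior_subset hx)) (subset_affineSpan ℝ s hy)
  obtain ⟨ε, hε, hmem⟩ := exists_pos_add_smul_mem hx hdir
  have := hmax _ hmem
  simp only [map_add, map_smul, map_sub, smul_eq_mul] at this
  nlinarith [hmax y hy]

lemma IsExtreme.subset_of_mem_intrinsicInterior {A B R : Set V} (hB : IsExtreme ℝ A B)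
    (hRA : R ⊆ A) {z : V} (hz : z ∈ intrinsicInterior ℝ R) (hzB : z ∈ B) : R ⊆ B := by
  intro r hr
  have hdir : z - r ∈ (affineSpan ℝ R).direction := by
    simpa using AffineSubspace.vsub_mem_direction
      (subset_affineSpan ℝ R (intrinsicInterior_subset hz)) (subset_affineSpan ℝ R hr)
  obtain ⟨ε, hε, hmem⟩ := exists_pos_add_smul_mem hz hdir
  refine hB.left_mem_of_mem_openSegment (hRA hr) (hRA hmem) hzB
    ⟨ε / (1 + ε), 1 / (1 + ε), by positivity, by positivity, by field_simp; ring, ?_⟩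
  match_scalars
  · field_simp
    ring
  · field_simp

lemma mem_closure_affineSpan_diff (hx : x ∈ s) (hxs : x ∉ intrinsicInterior ℝ s) :
    x ∈ closure ((affineSpan ℝ s : Set V) \ s) := by
  refine Metric.mem_closure_iff.2 fun ε hε => ?_
  by_contra! h
  refine hxs (mem_intrinsicInterior_iff_dist.2
    ⟨subset_affineSpan ℝ s hx, ε, hε, fun y hy hyx => ?_⟩)
  by_contra hys
  exact (h y ⟨hy, hys⟩).not_gt (by rwa [dist_comm])

lemma exists_pos_add_smul_mem_diff_intrinsicInterior (hs : IsCompact s)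
    (hx : x ∈ intrinsicInterior ℝ s) {v : V} (hv : v ∈ (affineSpan ℝ s).direction) (hv0 : v ≠ 0) :
    ∃ t : ℝ, 0 < t ∧ x + t • v ∈ s ∧ x + t • v ∉ intrinsicInterior ℝ s := by
  set T := {t : ℝ | 0 ≤ t ∧ x + t • v ∈ s}
  obtain ⟨C, hC⟩ := hs.isBounded.exists_norm_le
  have hT : BddAbove T := by
    refine ⟨(C + ‖x‖) / ‖v‖, fun t ht => (le_div_iff₀ (norm_pos_iff.2 hv0)).2 ?_⟩
    have := norm_sub_le (x + t • v) x
    rw [add_sub_cancel_left, norm_smul, Real.norm_of_nonneg ht.1] at this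
    linarith [hC _ ht.2]
  have hTc : IsClosed T :=
    isClosed_Ici.inter (hs.isClosed.preimage (by fun_prop))
  obtain ⟨ε, hε, hεs⟩ := exists_pos_add_smul_mem hx hv
  have hεT : ε ≤ sSup T := le_csSup hT ⟨hε.le, hεs⟩
  have hsup : sSup T ∈ T := hTc.csSup_mem ⟨ε, hε.le, hεs⟩ hT
  refine ⟨sSup T, hε.trans_le hεT, hsup.2, fun hi => ?_⟩
  obtain ⟨δ, hδ, hδs⟩ := exists_pos_add_smul_mem hi hv
  have : sSup T + δ ∈ T := ⟨by linarith, by rwa [add_smul, ← add_assoc]⟩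
  linarith [le_csSup hT this]

end IntrinsicInterior

section Support

variable {V : Type*} [NormedAddCommGroup V] [NormedSpace ℝ V] [FiniteDimensional ℝ V]

lemma exists_lt_of_notMem_intrinsicInterior {C : Set V} (hC : Convex ℝ C) {y : V} (hy : y ∈ C)
    (hyC : y ∉ intrinsicInterior ℝ C) :
    ∃ f : V →ₗ[ℝ] ℝ, (∀ x ∈ C, f x ≤ f y) ∧ ∃ x ∈ C, f x < f y := by
  -- Hahn–Banach in the direction `W` of `affineSpan ℝ C`, applied to the translate `D` of `C`
  -- by `-y`, whose interior in `W` is the translate of `intrinsicInterior ℝ C`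
  set W := (affineSpan ℝ C).direction
  have hyA : y ∈ affineSpan ℝ C := subset_affineSpan ℝ C hy
  have hsubW : ∀ {x}, x ∈ affineSpan ℝ C → x - y ∈ W := fun hx => by
    simpa using AffineSubspace.vsub_mem_direction hx hyA
  set D : Set W := {w | y + w ∈ C}
  have hD : Convex ℝ D := (hC.translate_preimage_right y).linear_preimage W.subtype
  have hint : ∀ w : W, w ∈ interior D ↔ y + w ∈ intrinsicInterior ℝ C :=
    mem_interior_setOf_add_mem_iff hyA
  obtain ⟨w₀, hw₀⟩ := Set.Nonempty.intrinsicInterior hC ⟨y, hy⟩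
  have hw₀D : (⟨w₀ - y, hsubW (subset_affineSpan ℝ C (intrinsicInterior_subset hw₀))⟩ : W) ∈
      interior D := (hint _).2 (by simpa using hw₀)
  obtain ⟨f, hf⟩ := geometric_hahn_banach_open_point hD.interior isOpen_interior
    (show (0 : W) ∉ interior D from fun h => hyC (by simpa using (hint 0).1 h))
  have hfD : ∀ w ∈ D, f w ≤ 0 := by
    have : closure (interior D) ⊆ {w | f w ≤ 0} :=
      closure_minimal (fun w hw => by simpa using (hf w hw).le)
        (isClosed_le f.continuous continuous_const)
    rw [hD.closure_interior_eq_closure_of_nonempty_interior ⟨_, hw₀D⟩] at this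
    exact fun w hw => this (subset_closure hw)
  obtain ⟨g, hg⟩ := LinearMap.exists_extend (f : W →ₗ[ℝ] ℝ)
  have hgf : ∀ {x} (hx : x ∈ affineSpan ℝ C), g x - g y = f ⟨x - y, hsubW hx⟩ :=
      fun {x} hx => by
    rw [← map_sub]
    exact LinearMap.congr_fun hg ⟨x - y, hsubW hx⟩
  refine ⟨g, fun x hx => ?_, w₀, intrinsicInterior_subset hw₀, ?_⟩
  · have := hgf (subset_affineSpan ℝ C hx)
    have := hfD ⟨x - y, hsubW (subset_affineSpan ℝ C hx)⟩ (by simpa [D] using hx)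
    linarith
  · have := hgf (subset_affineSpan ℝ C (intrinsicInterior_subset hw₀))
    have := hf _ hw₀D
    rw [map_zero] at this
    linarith

end Support

section Polytopes

variable {V : Type*} [NormedAddCommGroup V] [NormedSpace ℝ V]

lemma vectorSpan_convexHull (s : Set V) : vectorSpan ℝ (convexHull ℝ s) = vectorSpan ℝ s := by
  rw [← direction_affineSpan, affineSpan_convexHull, direction_affineSpan]

lemma affineSpan_eq_top_of_mem_interior {s : Set V} {x : V} (hx : x ∈ interior s) :
    affineSpan ℝ s = ⊤ :=
  top_unique ((isOpen_interior.affineSpan_eq_top ⟨x, hx⟩).ge.trans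
    (affineSpan_mono ℝ interior_subset))

lemma ContinuousLinearMap.eq_zero_of_forall_le_of_mem_interior {s : Set V} {x : V}
    {l : V →L[ℝ] ℝ} (hx : x ∈ interior s) (h : ∀ y ∈ s, l y ≤ l x) : l = 0 :=
  IsLocalMax.hasFDerivAt_eq_zero (Filter.mem_of_superset (mem_interior_iff_mem_nhds.1 hx) h)
    l.hasFDerivAt

lemma IsExposed.exists_finset_eq_convexHull {S : Finset V} {G : Set V}
    (hG : IsExposed ℝ (convexHull ℝ ↑S) G) : ∃ T ⊆ S, G = convexHull ℝ ↑T := by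
  classical
  refine ⟨S.filter (· ∈ G), Finset.filter_subset _ _, subset_antisymm ?_ ?_⟩
  · have hext : G.extremePoints ℝ ⊆ ↑(S.filter (· ∈ G)) := fun x hx => by
      simpa using ⟨extremePoints_convexHull_subset
        (hG.isExtreme.extremePoints_subset_extremePoints hx), hx.1⟩
    calc G = closure (convexHull ℝ (G.extremePoints ℝ)) :=
          (closure_convexHull_extremePoints
            (hG.isCompact (S.finite_toSet.isCompact_convexHull ℝ))
            (hG.convex (convex_convexHull ℝ _))).symm
      _ ⊆ closure (convexHull ℝ ↑(S.filter (· ∈ G))) := closure_mono (convexHull_mono hext)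
      _ = _ := ((Finset.finite_toSet _).isClosed_convexHull ℝ).closure_eq
  · exact convexHull_min (fun x hx => (Finset.mem_filter.1 hx).2)
      (hG.convex (convex_convexHull ℝ _))

lemma finite_setOf_isExposed (S : Finset V) :
    {G | IsExposed ℝ (convexHull ℝ (S : Set V)) G}.Finite := by
  refine ((S.powerset : Set (Finset V)).toFinite.image
    fun T : Finset V => convexHull ℝ (T : Set V)).subset fun G hG => ?_
  obtain ⟨T, hT, rfl⟩ := IsExposed.exists_finset_eq_convexHull hG
  exact ⟨T, Finset.mem_coe.2 (Finset.mem_powerset.2 hT), rfl⟩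

end Polytopes

section Faces

variable {d : ℕ} {S : Finset (E d)} {c : E d}

def faceOf (S : Finset (E d)) (c : E d) : Set (E d) :=
  {x ∈ convexHull ℝ ↑S | ∀ y ∈ convexHull ℝ ↑S, dot c y ≤ dot c x}

lemma isExposed_faceOf (S : Finset (E d)) (c : E d) :
    IsExposed ℝ (convexHull ℝ ↑S) (faceOf S c) :=
  fun _ => ⟨dotCLM c, rfl⟩

lemma faceOf_subset : faceOf S c ⊆ convexHull ℝ ↑S := fun _ hx => hx.1

lemma dot_le_of_mem_convexHull {s : Set (E d)} {M : ℝ} (h : ∀ w ∈ s, dot c w ≤ M) {x : E d}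
    (hx : x ∈ convexHull ℝ s) : dot c x ≤ M :=
  convexHull_min h (convex_halfSpace_le (dotL c).isLinear M) hx

lemma exists_isGreatest_dot (hS : S.Nonempty) (c : E d) : ∃ M, IsGreatest (dot c '' ↑S) M := by
  obtain ⟨w, hw, hmax⟩ := S.exists_max_image (dot c) hS
  exact ⟨_, ⟨w, hw, rfl⟩, by rintro _ ⟨v, hv, rfl⟩; exact hmax v hv⟩

lemma faceOf_eq_of_isGreatest {M : ℝ} (hM : IsGreatest (dot c '' ↑S) M) :
    faceOf S c = {x ∈ convexHull ℝ ↑S | dot c x = M} := by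
  obtain ⟨⟨w, hw, rfl⟩, hmax⟩ := hM
  have hle : ∀ x ∈ convexHull ℝ ↑S, dot c x ≤ dot c w :=
    fun x => dot_le_of_mem_convexHull fun v hv => hmax ⟨v, hv, rfl⟩
  ext x
  exact ⟨fun hx => ⟨hx.1, le_antisymm (hle x hx.1) (hx.2 w (subset_convexHull ℝ _ hw))⟩,
    fun hx => ⟨hx.1, fun y hy => hx.2 ▸ hle y hy⟩⟩

lemma faceOf_nonempty (hS : S.Nonempty) (c : E d) : (faceOf S c).Nonempty := by
  obtain ⟨M, hM⟩ := exists_isGreatest_dot hS c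
  obtain ⟨w, hw, hwM⟩ := hM.1
  exact ⟨w, (faceOf_eq_of_isGreatest hM).symm ▸ ⟨subset_convexHull ℝ _ hw, hwM⟩⟩

lemma faceOf_eq_convexHull_iff :
    faceOf S c = convexHull ℝ ↑S ↔ vectorSpan ℝ (S : Set (E d)) ≤ LinearMap.ker (dotL c) := by
  constructor
  · intro h
    rw [vectorSpan_def, Submodule.span_le]
    rintro _ ⟨x, hx, y, hy, rfl⟩
    have hx' : x ∈ faceOf S c := h ▸ subset_convexHull ℝ _ hx
    have hy' : y ∈ faceOf S c := h ▸ subset_convexHull ℝ _ hy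
    simp [dot_sub_right, le_antisymm (hy'.2 x hx'.1) (hx'.2 y hy'.1)]
  · refine fun h => subset_antisymm faceOf_subset fun x hx => ⟨hx, fun y hy => le_of_eq ?_⟩
    have := h ((vectorSpan_convexHull (S : Set (E d))) ▸ vsub_mem_vectorSpan ℝ hy hx)
    simpa [dot_sub_right, sub_eq_zero] using this

lemma finrank_vectorSpan_faceOf_lt (hS : S.Nonempty) (hc : faceOf S c ≠ convexHull ℝ ↑S) :
    finrank ℝ (vectorSpan ℝ (faceOf S c)) < finrank ℝ (vectorSpan ℝ (S : Set (E d))) := by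
  have hle : vectorSpan ℝ (faceOf S c) ≤ vectorSpan ℝ (S : Set (E d)) :=
    (vectorSpan_mono ℝ faceOf_subset).trans_eq (vectorSpan_convexHull _)
  refine Submodule.finrank_lt_finrank_of_lt (lt_of_le_of_ne hle fun heq => hc ?_)
  obtain ⟨M, hM⟩ := exists_isGreatest_dot hS c
  rw [faceOf_eq_convexHull_iff, ← heq]
  exact vectorSpan_le_ker_of_forall_eq (f := dotL c) fun x hx =>
    (faceOf_eq_of_isGreatest hM ▸ hx).2

lemma notMem_intrinsicInterior_of_mem_faceOf (hc : faceOf S c ≠ convexHull ℝ ↑S) {z : E d}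
    (hz : z ∈ faceOf S c) : z ∉ intrinsicInterior ℝ (convexHull ℝ ↑S) := fun hzi => by
  have h := forall_apply_eq_of_forall_le_of_mem_intrinsicInterior (f := dotL c) hz.2 hzi
  exact hc (subset_antisymm faceOf_subset fun x hx =>
    ⟨hx, fun y hy => ((h y hy).trans (h x hx).symm).le⟩)

end Faces

section FacetsThroughBoundaryPoints

variable {d : ℕ} {S : Finset (E d)} {c : E d}

lemma exists_ne_zero_mem_forall_dot_eq_zero {U W : Submodule ℝ (E d)} (c : E d)
    (h : finrank ℝ U + 1 < finrank ℝ W) :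
    ∃ p ∈ W, p ≠ 0 ∧ dot c p = 0 ∧ ∀ u ∈ U, dot p u = 0 := by
  set U' := U ⊔ ℝ ∙ c
  let L : W →ₗ[ℝ] Module.Dual ℝ U' :=
    U'.subtype.dualMap ∘ₗ (dotProductEquiv ℝ (Fin d)).toLinearMap ∘ₗ W.subtype
  have hc : finrank ℝ (ℝ ∙ c) ≤ 1 := by simpa using finrank_span_le_card ({c} : Set (E d))
  have hU' : finrank ℝ U' ≤ finrank ℝ U + 1 :=
    (Submodule.finrank_add_le_finrank_add_finrank _ _).trans (by omega)
  obtain ⟨p, hpL, hp0⟩ := Submodule.exists_mem_ne_zero_of_ne_bot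
    (LinearMap.ker_ne_bot_of_finrank_lt (f := L) (by rw [Subspace.dual_finrank_eq]; omega))
  have hpU' : ∀ u ∈ U', dot p u = 0 := fun u hu =>
    LinearMap.congr_fun (LinearMap.mem_ker.1 hpL) ⟨u, hu⟩
  refine ⟨p, p.2, by simpa using hp0, ?_, fun u hu => hpU' u (Submodule.mem_sup_left hu)⟩
  rw [dot_comm]
  exact hpU' c (Submodule.mem_sup_right (Submodule.mem_span_singleton_self c))

/-- Rotating `c` towards `p` until the first vertex with `γ < dot p w` reaches the face. -/
lemma exists_faceOf_add_smul_superset (hS : S.Nonempty) {p : E d} {γ : ℝ}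
    (hp : ∀ x ∈ faceOf S c, dot p x = γ) (hw : ∃ w ∈ S, γ < dot p w) :
    ∃ θ : ℝ, 0 < θ ∧ faceOf S c ⊆ faceOf S (c + θ • p) ∧
      ∃ w ∈ faceOf S (c + θ • p), γ < dot p w := by
  classical
  obtain ⟨M, hM⟩ := exists_isGreatest_dot hS c
  have hface := faceOf_eq_of_isGreatest hM
  set X := S.filter fun w => γ < dot p w
  have hX : X.Nonempty := by
    obtain ⟨w, hw, h⟩ := hw
    exact ⟨w, Finset.mem_filter.2 ⟨hw, h⟩⟩
  have hXM : ∀ w ∈ X, dot c w < M := by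
    intro w hw
    obtain ⟨hwS, hpw⟩ := Finset.mem_filter.1 hw
    refine (hM.2 ⟨w, hwS, rfl⟩).lt_of_ne fun h => ?_
    have := hp w (hface ▸ ⟨subset_convexHull ℝ _ hwS, h⟩)
    linarith
  obtain ⟨w₁, hw₁, hmin⟩ := X.exists_min_image (fun w => (M - dot c w) / (dot p w - γ)) hX
  obtain ⟨hw₁S, hpw₁⟩ := Finset.mem_filter.1 hw₁
  set θ := (M - dot c w₁) / (dot p w₁ - γ)
  have hθ : 0 < θ := div_pos (by linarith [hXM w₁ hw₁]) (by linarith)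
  have hθw₁ : dot (c + θ • p) w₁ = M + θ * γ := by
    have := div_mul_cancel₀ (M - dot c w₁) (sub_pos.2 hpw₁).ne'
    rw [dot_add_left, dot_smul_left]
    linear_combination this
  have hle : ∀ w ∈ S, dot (c + θ • p) w ≤ M + θ * γ := by
    intro w hwS
    rw [dot_add_left, dot_smul_left]
    by_cases hpw : γ < dot p w
    · have := hmin w (Finset.mem_filter.2 ⟨hwS, hpw⟩)
      rw [le_div_iff₀ (by linarith)] at this
      linarith
    · nlinarith [hM.2 ⟨w, hwS, rfl⟩]
  have hM₂ : IsGreatest (dot (c + θ • p) '' ↑S) (M + θ * γ) :=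
    ⟨⟨w₁, hw₁S, hθw₁⟩, by rintro _ ⟨w, hw, rfl⟩; exact hle w hw⟩
  refine ⟨θ, hθ, ?_⟩
  rw [faceOf_eq_of_isGreatest hM₂]
  refine ⟨fun x hx => ⟨faceOf_subset hx, ?_⟩, w₁, ⟨subset_convexHull ℝ _ hw₁S, hθw₁⟩, hpw₁⟩
  have hxM : dot c x = M := (hface ▸ hx).2
  rw [dot_add_left, dot_smul_left, hp x hx, hxM]

lemma exists_faceOf_superset_finrank_lt (hS : S.Nonempty) (hdim : finrank ℝ (vectorSpan ℝ
      (faceOf S c)) + 1 < finrank ℝ (vectorSpan ℝ (S : Set (E d)))) :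
    ∃ c₂, faceOf S c₂ ≠ convexHull ℝ ↑S ∧ faceOf S c ⊆ faceOf S c₂ ∧
      finrank ℝ (vectorSpan ℝ (faceOf S c)) < finrank ℝ (vectorSpan ℝ (faceOf S c₂)) := by
  obtain ⟨p, hpS, hp0, hcp, hpF⟩ := exists_ne_zero_mem_forall_dot_eq_zero c hdim
  obtain ⟨a, ha⟩ := faceOf_nonempty hS c
  obtain ⟨w, hwS, hw⟩ : ∃ w ∈ S, dot p w ≠ dot p a := by
    by_contra! h
    exact hp0 (dot_self_eq_zero.1 (vectorSpan_le_ker_of_forall_eq (f := dotL p) h hpS))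
  -- rescaling `p` by `dot p w - dot p a` makes `w` lie on the positive side of the face
  set q := (dot p w - dot p a) • p
  have hcq : dot c q = 0 := by simp [q, dot_smul_right, hcp]
  have hqq : dot q q ≠ 0 := mt dot_self_eq_zero.1 (smul_ne_zero (sub_ne_zero.2 hw) hp0)
  have hqF : ∀ v ∈ vectorSpan ℝ (faceOf S c), dot q v = 0 := fun v hv => by
    simp [q, dot_smul_left, hpF v hv]
  have hqa : ∀ x ∈ faceOf S c, dot q x = dot q a := fun x hx => by
    simpa [dot_sub_right, sub_eq_zero] using hqF _ (vsub_mem_vectorSpan ℝ hx ha)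
  have hqw : dot q a < dot q w := by
    simp only [q, dot_smul_left]
    nlinarith [sq_pos_of_ne_zero (sub_ne_zero.2 hw)]
  obtain ⟨θ, hθ, hsub, w₂, hw₂, hqw₂⟩ := exists_faceOf_add_smul_superset hS hqa ⟨w, hwS, hqw⟩
  refine ⟨c + θ • q, fun h => ?_, hsub, Submodule.finrank_lt_finrank_of_lt ?_⟩
  · have := faceOf_eq_convexHull_iff.1 h (Submodule.smul_mem _ (dot p w - dot p a) hpS)
    rw [LinearMap.mem_ker, dotL_apply, dot_add_left, dot_smul_left, hcq, zero_add] at this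
    exact mul_ne_zero hθ.ne' hqq this
  · refine SetLike.lt_iff_le_and_exists.2
      ⟨vectorSpan_mono ℝ hsub, w₂ - a, vsub_mem_vectorSpan ℝ hw₂ (hsub ha), fun h => ?_⟩
    have := hqF _ h
    rw [dot_sub_right] at this
    linarith

lemma exists_faceOf_superset_finrank_eq (hS : S.Nonempty)
    (hc : faceOf S c ≠ convexHull ℝ ↑S) :
    ∃ c₂, faceOf S c₂ ≠ convexHull ℝ ↑S ∧ faceOf S c ⊆ faceOf S c₂ ∧
      finrank ℝ (vectorSpan ℝ (faceOf S c₂)) = finrank ℝ (vectorSpan ℝ (S : Set (E d))) - 1 := by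
  induction hn : finrank ℝ (vectorSpan ℝ (S : Set (E d))) - finrank ℝ (vectorSpan ℝ (faceOf S c))
    using Nat.strong_induction_on generalizing c with
  | _ n ih =>
    have hlt := finrank_vectorSpan_faceOf_lt hS hc
    by_cases heq : finrank ℝ (vectorSpan ℝ (faceOf S c)) + 1 =
        finrank ℝ (vectorSpan ℝ (S : Set (E d)))
    · exact ⟨c, hc, subset_rfl, by omega⟩
    obtain ⟨c₂, hc₂, hsub, hlt₂⟩ := exists_faceOf_superset_finrank_lt (c := c) hS (by omega)
    have hlt₃ := finrank_vectorSpan_faceOf_lt hS hc₂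
    obtain ⟨c₃, hc₃, hsub₃, heq₃⟩ := ih _ (by omega) hc₂ rfl
    exact ⟨c₃, hc₃, hsub.trans hsub₃, heq₃⟩

lemma exists_faceOf_mem_finrank_eq {y : E d} (hy : y ∈ convexHull ℝ ↑S)
    (hyS : y ∉ intrinsicInterior ℝ (convexHull ℝ ↑S)) :
    ∃ c, y ∈ faceOf S c ∧ faceOf S c ≠ convexHull ℝ ↑S ∧
      finrank ℝ (vectorSpan ℝ (faceOf S c)) = finrank ℝ (vectorSpan ℝ (S : Set (E d))) - 1 := by
  have hS : S.Nonempty := Finset.coe_nonempty.1 (convexHull_nonempty_iff.1 ⟨y, hy⟩)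
  obtain ⟨f, hf, x, hx, hxy⟩ :=
    exists_lt_of_notMem_intrinsicInterior (convex_convexHull ℝ _) hy hyS
  obtain ⟨c, hc⟩ := exists_dot_eq f
  have hyc : y ∈ faceOf S c := ⟨hy, fun z hz => by simpa [hc] using hf z hz⟩
  have hproper : faceOf S c ≠ convexHull ℝ ↑S := fun h => by
    have := (h ▸ hx : x ∈ faceOf S c).2 y hy
    rw [hc, hc] at this
    linarith
  obtain ⟨c₂, hc₂, hsub, hdim⟩ := exists_faceOf_superset_finrank_eq hS hproper
  exact ⟨c₂, hsub hyc, hc₂, hdim⟩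

end FacetsThroughBoundaryPoints

section Facets

variable {d : ℕ} {P F G : Set (E d)} {η u : E d}

lemma IsFacet.finrank_vectorSpan (hF : IsFacet P F) : finrank ℝ (vectorSpan ℝ F) = d - 1 := by
  rw [← direction_affineSpan]
  exact hF.2.2

lemma finrank_vectorSpan_of_zero_mem_interior (h0 : (0 : E d) ∈ interior P) :
    finrank ℝ (vectorSpan ℝ P) = d := by
  rw [← direction_affineSpan, affineSpan_eq_top_of_mem_interior h0, AffineSubspace.direction_top,
    finrank_top, finrank_fin_fun]

lemma IsFacet.eq_setOf_dot_eq (hF : IsFacet P F) (hη : ∀ y ∈ F, dot η y = -1) :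
    F = {x ∈ P | dot η x = -1} := by
  obtain ⟨y₀, hy₀⟩ := hF.2.1
  refine subset_antisymm (fun x hx => ⟨hF.1.subset hx, hη x hx⟩) fun x ⟨hxP, hx⟩ => ?_
  obtain ⟨l, hl⟩ := hF.1 ⟨y₀, hy₀⟩
  have hmax : ∀ y ∈ P, l y ≤ l y₀ := ((Set.ext_iff.1 hl y₀).1 hy₀).2
  have hly₀ : ∀ y ∈ F, (l : E d →ₗ[ℝ] ℝ) y = l y₀ := fun y hy =>
    le_antisymm (hmax y (hF.1.subset hy)) (((Set.ext_iff.1 hl y).1 hy).2 y₀ (hF.1.subset hy₀))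
  have hlx := apply_eq_of_mem_affineSpan hly₀
    ((mem_affineSpan_iff_dot_eq ⟨y₀, hy₀⟩ hF.finrank_vectorSpan hη).2 hx)
  rw [hl]
  exact ⟨hxP, fun y hy => (hmax y hy).trans_eq hlx.symm⟩

lemma IsFacet.exists_normal (hd : 0 < d) (h0 : (0 : E d) ∈ interior P) (hG : IsFacet P G) :
    ∃ u, (∀ x ∈ G, dot u x = -1) ∧ ∀ y ∈ P, -1 ≤ dot u y := by
  obtain ⟨hexp, ⟨g, hg⟩, hdim⟩ := hG
  obtain ⟨l, hl⟩ := hexp ⟨g, hg⟩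
  obtain ⟨c, hc⟩ := exists_dot_eq (l : E d →ₗ[ℝ] ℝ)
  simp only [ContinuousLinearMap.coe_coe] at hc
  have hmax : ∀ y ∈ P, l y ≤ l g := ((Set.ext_iff.1 hl g).1 hg).2
  have hpos : 0 < l g := by
    refine lt_of_le_of_ne (by simpa using hmax 0 (interior_subset h0)) fun h => ?_
    have hl0 : l = 0 :=
      l.eq_zero_of_forall_le_of_mem_interior h0 (by simpa [← h] using hmax)
    have hGP : G = P := by
      rw [hl, hl0]
      ext x
      simp
    rw [hGP, direction_affineSpan, finrank_vectorSpan_of_zero_mem_interior h0] at hdim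
    omega
  refine ⟨-(l g)⁻¹ • c, fun x hx => ?_, fun y hy => ?_⟩
  · have : l x = l g :=
      le_antisymm (hmax x (hexp.subset hx)) (((Set.ext_iff.1 hl x).1 hx).2 g (hexp.subset hg))
    rw [dot_smul_left, hc, this, neg_mul, inv_mul_cancel₀ hpos.ne']
  · rw [dot_smul_left, hc, neg_mul, neg_le_neg_iff]
    exact inv_mul_le_one_of_le₀ (hmax y hy) hpos.le

/-- A facet normal `u` is a vertex of `P*`, since it is the only point of `P*` that pairs to `-1`
with all of the facet. -/
lemma IsReflexive.isLatticePt_of_isFacet (hP : IsReflexive P) (hG : IsFacet P G)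
    (hu : ∀ x ∈ G, dot u x = -1) (huP : ∀ y ∈ P, -1 ≤ dot u y) : IsLatticePt u := by
  have hext : u ∈ (polarDual P).extremePoints ℝ := by
    refine mem_extremePoints.2 ⟨huP, fun x₁ hx₁ x₂ hx₂ ⟨a, b, ha, hb, hab, hx⟩ => ?_⟩
    have key : ∀ v ∈ G, dot x₁ v = -1 ∧ dot x₂ v = -1 := by
      intro v hv
      have h₁ := hx₁ v (hG.1.subset hv)
      have h₂ := hx₂ v (hG.1.subset hv)
      have : a * dot x₁ v + b * dot x₂ v = -1 := by
        rw [← hu v hv, ← hx, dot_add_left, dot_smul_left, dot_smul_left]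
      constructor <;> nlinarith
    exact ⟨eq_of_forall_dot_eq_neg_one hG.2.1 hG.finrank_vectorSpan hu fun v hv => (key v hv).1,
      eq_of_forall_dot_eq_neg_one hG.2.1 hG.finrank_vectorSpan hu fun v hv => (key v hv).2⟩
  rw [hP.2.2] at hext
  exact (extremePoints_convexHull_subset hext).2

lemma IsFacet.neg_one_lt_dot_of_mem_intrinsicInterior (hF : IsFacet P F)
    (hη : ∀ y ∈ F, dot η y = -1) (hu : ∀ y ∈ F, -1 ≤ dot u y) (huη : u ≠ η) {w : E d}
    (hw : w ∈ intrinsicInterior ℝ F) : -1 < dot u w := by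
  refine (hu w (intrinsicInterior_subset hw)).lt_of_ne fun h => huη
    (eq_of_forall_dot_eq_neg_one hF.2.1 hF.finrank_vectorSpan hη fun y hy => ?_)
  have := forall_apply_eq_of_forall_le_of_mem_intrinsicInterior (f := dotL (-u))
    (fun y hy => by simp [dot_neg_left, ← h]; linarith [hu y hy]) hw y hy
  simp only [dotL_apply, dot_neg_left, neg_inj] at this
  rw [this, h]

end Facets

section FacetsOfPolytopes

variable {d : ℕ} {S : Finset (E d)} {F : Set (E d)} {η : E d}

lemma IsFacet.exists_add_smul_mem_diff_intrinsicInterior (hF : IsFacet (convexHull ℝ ↑S) F)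
    (hη : ∀ y ∈ F, dot η y = -1) {m : E d} (hm0 : dot η m = 0) (hm : m ≠ 0) :
    ∃ w ∈ intrinsicInterior ℝ F, ∃ t : ℝ, 0 < t ∧ w + t • m ∈ F ∧
      w + t • m ∉ intrinsicInterior ℝ F := by
  obtain ⟨w, hw⟩ := Set.Nonempty.intrinsicInterior (hF.1.convex (convex_convexHull ℝ _)) hF.2.1
  have hmF : m ∈ (affineSpan ℝ F).direction := by
    rw [direction_affineSpan, vectorSpan_eq_ker_dotL hF.2.1 hF.finrank_vectorSpan hη]
    exact hm0
  exact ⟨w, hw, exists_pos_add_smul_mem_diff_intrinsicInterior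
    (hF.1.isCompact (S.finite_toSet.isCompact_convexHull ℝ)) hw hmF hm⟩

lemma exists_isFacet_mem_of_mem_frontier (h0 : (0 : E d) ∈ interior (convexHull ℝ ↑S))
    {y : E d} (hy : y ∈ frontier (convexHull ℝ (S : Set (E d)))) :
    ∃ G, IsFacet (convexHull ℝ ↑S) G ∧ y ∈ G := by
  obtain ⟨c, hyc, -, hdim⟩ := exists_faceOf_mem_finrank_eq
    (((S.finite_toSet).isClosed_convexHull ℝ).frontier_subset hy)
    fun hi => hy.2 (intrinsicInterior_subset_interior (affineSpan_eq_top_of_mem_interior h0) hi)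
  refine ⟨faceOf S c, ⟨isExposed_faceOf S c, ⟨y, hyc⟩, ?_⟩, hyc⟩
  rw [direction_affineSpan, hdim, ← vectorSpan_convexHull,
    finrank_vectorSpan_of_zero_mem_interior h0]

/-- Points of `affineSpan ℝ F` just outside `F` project radially onto facets other than `F`; these
are finitely many closed sets, so one of them contains `z`. -/
lemma IsFacet.exists_isFacet_mem_not_subset (hF : IsFacet (convexHull ℝ ↑S) F)
    (h0 : (0 : E d) ∈ interior (convexHull ℝ ↑S)) (hη : ∀ y ∈ F, dot η y = -1)
    (hηP : ∀ y ∈ convexHull ℝ ↑S, -1 ≤ dot η y) {z : E d} (hz : z ∈ F)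
    (hzF : z ∉ intrinsicInterior ℝ F) : ∃ G, IsFacet (convexHull ℝ ↑S) G ∧ z ∈ G ∧ ¬G ⊆ F := by
  set P := convexHull ℝ (S : Set (E d))
  have hPc : Convex ℝ P := convex_convexHull ℝ _
  have hP0 : P ∈ nhds 0 := mem_interior_iff_mem_nhds.1 h0
  have hPcl : IsClosed P := S.finite_toSet.isClosed_convexHull ℝ
  set 𝒢 := {G | IsFacet P G ∧ ¬G ⊆ F}
  have h𝒢 : IsClosed (⋃ G ∈ 𝒢, G) :=
    ((finite_setOf_isExposed S).subset fun G hG => hG.1.1).isClosed_biUnion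
      fun G hG => hG.1.1.isClosed hPcl
  set φ : E d → E d := fun y => (gauge P y)⁻¹ • y
  have hφ : φ '' ((affineSpan ℝ F : Set (E d)) \ F) ⊆ ⋃ G ∈ 𝒢, G := by
    rintro _ ⟨y, ⟨hyA, hyF⟩, rfl⟩
    have hηy : dot η y = -1 := (mem_affineSpan_iff_dot_eq hF.2.1 hF.finrank_vectorSpan hη).1 hyA
    have hy1 : 1 < gauge P y := lt_of_not_ge fun h => hyF <| (hF.eq_setOf_dot_eq hη) ▸
      ⟨hPcl.closure_eq ▸ (gauge_le_one_iff_mem_closure hPc hP0).1 h, hηy⟩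
    have hφy : φ y ∈ frontier P := by
      rw [← gauge_eq_one_iff_mem_frontier hPc hP0, gauge_smul_of_nonneg (by positivity),
        smul_eq_mul, inv_mul_cancel₀ (by positivity)]
    obtain ⟨G, hG, hφG⟩ := exists_isFacet_mem_of_mem_frontier h0 hφy
    refine mem_biUnion ⟨hG, fun hGF => ?_⟩ hφG
    have := hη _ (hGF hφG)
    rw [dot_smul_right, hηy] at this
    linarith [inv_lt_one_of_one_lt₀ hy1]
  have hgz : gauge P z = 1 := by
    rw [gauge_eq_one_iff_mem_frontier hPc hP0]
    refine ⟨subset_closure (hF.1.subset hz), fun hzP => ?_⟩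
    have := (-dotCLM η).eq_zero_of_forall_le_of_mem_interior hzP fun y hy => by
      simp [hη z hz]
      linarith [hηP y hy]
    simpa [hη z hz] using congrArg (fun l => l z) this
  have hcont : ContinuousAt φ z :=
    ((continuous_gauge hPc hP0).continuousAt.inv₀ (by simp [hgz])).smul continuousAt_id
  have hzcl : φ z ∈ closure (φ '' ((affineSpan ℝ F : Set (E d)) \ F)) :=
    mem_closure_image hcont (mem_closure_affineSpan_diff hz hzF)
  have hz𝒢 : φ z ∈ ⋃ G ∈ 𝒢, G := h𝒢.closure_subset (closure_mono hφ hzcl)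
  simp only [φ, hgz, inv_one, one_smul] at hz𝒢
  obtain ⟨G, ⟨hG, hGF⟩, hzG⟩ := mem_iUnion₂.1 hz𝒢
  exact ⟨G, hG, hzG, hGF⟩

/-- A ridge of `F` through `y` lies in a second facet `G`, because `G` contains a relative
interior point of the ridge. -/
lemma IsFacet.exists_adjacent_isFacet_mem (hF : IsFacet (convexHull ℝ ↑S) F)
    (h0 : (0 : E d) ∈ interior (convexHull ℝ ↑S)) (hη : ∀ y ∈ F, dot η y = -1)
    (hηP : ∀ y ∈ convexHull ℝ ↑S, -1 ≤ dot η y) {y : E d} (hy : y ∈ F)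
    (hyF : y ∉ intrinsicInterior ℝ F) :
    ∃ G, IsFacet (convexHull ℝ ↑S) G ∧ y ∈ G ∧ ¬G ⊆ F ∧
      d - 2 ≤ finrank ℝ (vectorSpan ℝ (F ∩ G)) := by
  obtain ⟨T, -, hFT⟩ := hF.1.exists_finset_eq_convexHull
  obtain ⟨c, hyR, hR, hdim⟩ := exists_faceOf_mem_finrank_eq (hFT ▸ hy) (hFT ▸ hyF)
  have hRF : faceOf T c ⊆ F := hFT ▸ faceOf_subset
  obtain ⟨z, hz⟩ := Set.Nonempty.intrinsicInterior
    ((isExposed_faceOf T c).convex (convex_convexHull ℝ _)) ⟨y, hyR⟩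
  have hzR := intrinsicInterior_subset hz
  obtain ⟨G, hG, hzG, hGF⟩ := hF.exists_isFacet_mem_not_subset h0 hη hηP (hRF hzR)
    (hFT ▸ notMem_intrinsicInterior_of_mem_faceOf hR hzR)
  have hRG : faceOf T c ⊆ G :=
    hG.1.isExtreme.subset_of_mem_intrinsicInterior (hRF.trans hF.1.subset) hz hzG
  refine ⟨G, hG, hRG hyR, hGF, ?_⟩
  calc d - 2 = finrank ℝ (vectorSpan ℝ (faceOf T c)) := by
        rw [hdim, ← vectorSpan_convexHull, ← hFT, hF.finrank_vectorSpan]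
        omega
    _ ≤ _ := Submodule.finrank_mono (vectorSpan_mono ℝ (subset_inter hRF hRG))

end FacetsOfPolytopes

theorem reflexive_zero_pairing_adjacent_facet (d : ℕ) (P F : Set (E d))
    (hP : IsReflexive P) (hF : IsFacet P F) (η m : E d)
    (hη : ∀ y ∈ F, dot η y = -1) (hηP : ∀ y ∈ P, -1 ≤ dot η y)
    (hm : IsLatticePt m) (hmb : m ∈ frontier P) (hm0 : dot η m = 0) :
    ∃ G, IsFacet P G ∧ m ∈ G ∧ (F ∩ G).Nonempty ∧
      Module.finrank ℝ (affineSpan ℝ (F ∩ G)).direction = d - 2 := by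
  obtain ⟨S, -, rfl⟩ := hP.1
  have hmP : m ∈ convexHull ℝ (S : Set (E d)) :=
    (S.finite_toSet.isClosed_convexHull ℝ).frontier_subset hmb
  have hm_ne : m ≠ 0 := by
    rintro rfl
    exact hmb.2 hP.2.1
  obtain ⟨w, hw, t, ht, hyF, hyi⟩ := hF.exists_add_smul_mem_diff_intrinsicInterior hη hm0 hm_ne
  obtain ⟨G, hG, hyG, hGF, hdim⟩ := hF.exists_adjacent_isFacet_mem hP.2.1 hη hηP hyF hyi
  obtain ⟨u, hu, huP⟩ := hG.exists_normal
    (Nat.pos_of_ne_zero fun hd => hm_ne (by subst hd; exact Subsingleton.elim _ _)) hP.2.1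
  have huη : u ≠ η := by
    rintro rfl
    exact hGF ((hG.eq_setOf_dot_eq hu).trans (hF.eq_setOf_dot_eq hη).symm).le
  -- `dot u` is `-1` at `y` but `> -1` at `w`, so the integer `dot u m` is negative
  have hum : dot u m = -1 := by
    have hwu := hF.neg_one_lt_dot_of_mem_intrinsicInterior hη (fun y hy => huP y (hF.1.subset hy))
      huη hw
    have hyu := hu _ hyG
    rw [dot_add_right, dot_smul_right] at hyu
    exact dot_eq_neg_one_of_neg (hP.isLatticePt_of_isFacet hG hu huP) hm (huP m hmP)
      (neg_of_mul_neg_right (a := t) (by linarith) ht.le)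
  refine ⟨G, hG, (hG.eq_setOf_dot_eq hu) ▸ ⟨hmP, hum⟩, ⟨_, hyF, hyG⟩, ?_⟩
  rw [direction_affineSpan]
  exact le_antisymm (finrank_vectorSpan_le_sub_two huη ⟨_, hyF, hyG⟩ (fun x hx => hu x hx.2)
    fun x hx => hη x hx.1) hdim
end

section
/- Let P be a d-dimensional simplicial reflexive polytope with centrally symmetric facets F, −F, where the vertices of F are e_1, …, e_d. Then every vertex of P lies in {±e_1, …, ±e_d} ∪ {v^1, …, v^d}, where v^i is the unique vertex of P contained in the unique facet intersecting F in conv(e_j : j ≠ i) other than the e_j, j ≠ i. In particular P has at most 3d vertices. -/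
open Pointwise Matrix

/-! Normalise the facet normal `u` of `F` so that `F = P ∩ {⟪u, ·⟫ = 1}`; then
`-F = P ∩ {⟪u, ·⟫ = -1}`. Facet normals of a reflexive polytope are lattice points (they are
vertices of the dual polytope), so every vertex `v` of `P` lies at level `⟪u, v⟫ ∈ {-1, 0, 1}`,
and the vertices at levels `±1` are vertices of `±F`. A vertex `v` at level `0` is nonzero, so
writing `v = ∑ cᵢ eᵢ` we get `∑ cᵢ = 0` and some `c_k < 0`. The normal `u_k` of the facet `G_k`
through the `eⱼ` (`j ≠ k`) and `v^k` satisfies `⟪u_k, e_k⟫ < 1`, hence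
`⟪u_k, v⟫ = c_k (⟪u_k, e_k⟫ - 1) > 0`, and integrality forces `⟪u_k, v⟫ = 1`, i.e. `v ∈ G_k`.
The simplex `G_k` has exactly the `d` vertices `eⱼ` (`j ≠ k`) and `v^k`, and `v` is none of the
`eⱼ`, so `v = v^k`. -/

open Set Function Topology

lemma Set.ncard_range_le {α ι : Type*} [Fintype ι] (f : ι → α) :
    (range f).ncard ≤ Fintype.card ι := by
  rw [← image_univ, ← Nat.card_eq_fintype_card, ← ncard_univ]
  exact ncard_image_le

lemma Function.Injective.update_of_notMem_range {ι α : Type*} [DecidableEq ι] {f : ι → α}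
    (hf : Injective f) (i : ι) {a : α} (ha : a ∉ range f) : Injective (update f i a) := by
  intro x y h
  by_cases hx : x = i <;> by_cases hy : y = i
  · rw [hx, hy]
  · rw [hx, update_self, update_of_ne hy] at h
    exact (ha ⟨y, h.symm⟩).elim
  · rw [hy, update_self, update_of_ne hx] at h
    exact (ha ⟨x, h⟩).elim
  · rw [update_of_ne hx, update_of_ne hy] at h
    exact hf h

lemma AffineIndependent.linearIndependent_of_forall_eq_one {k V ι : Type*} [Ring k]
    [AddCommGroup V] [Module k V] {p : ι → V} (hp : AffineIndependent k p) (f : V →ₗ[k] k)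
    (hf : ∀ i, f (p i) = 1) : LinearIndependent k p := by
  rw [linearIndependent_iff']
  intro s g hg i hi
  refine hp.eq_zero_of_sum_eq_zero ?_ hg i hi
  simpa [hf] using congrArg f hg

lemma single_mem_extremePoints_stdSimplex {ι : Type*} [Fintype ι] [DecidableEq ι] (k : ι) :
    Pi.single k 1 ∈ extremePoints ℝ (stdSimplex ℝ ι) := by
  have eq_single : ∀ x ∈ stdSimplex ℝ ι, x k = 1 → x = Pi.single k 1 := by
    intro x hx hxk
    have hrest : ∑ j ∈ Finset.univ.erase k, x j = 0 := by
      linarith [Finset.add_sum_erase Finset.univ x (Finset.mem_univ k), hx.2]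
    funext j
    rcases eq_or_ne j k with rfl | hj
    · simpa using hxk
    · rw [Pi.single_eq_of_ne hj]
      exact (Finset.sum_eq_zero_iff_of_nonneg fun i _ => hx.1 i).1 hrest j (by simp [hj])
  refine ⟨single_mem_stdSimplex ℝ k, fun x hx y hy ⟨a, b, ha, hb, hab, hxy⟩ => ?_⟩
  have hk : a * x k + b * y k = 1 := by simpa using congrFun hxy k
  have hxk := (mem_Icc_of_mem_stdSimplex hx k).2
  have hyk := (mem_Icc_of_mem_stdSimplex hy k).2
  exact eq_single x hx (by nlinarith)

lemma Module.Basis.mem_extremePoints_convexHull {ι V : Type*} [Fintype ι] [AddCommGroup V]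
    [Module ℝ V] (b : Module.Basis ι ℝ V) (i : ι) :
    b i ∈ extremePoints ℝ (convexHull ℝ (range b)) := by
  classical
  have h : b.equivFun '' convexHull ℝ (range b) = stdSimplex ℝ ι := by
    rw [← convexHull_rangle_single_eq_stdSimplex]
    simpa [← range_comp, Function.comp_def, Finsupp.single_eq_pi_single]
      using b.equivFun.toLinearMap.image_convexHull (range b)
  rw [← b.equivFun.injective.mem_set_image, image_extremePoints, h]
  simpa [Finsupp.single_eq_pi_single] using single_mem_extremePoints_stdSimplex (ι := ι) i

lemma mem_range_of_mem_extremePoints {ι V : Type*} [AddCommGroup V] [Module ℝ V] {P : Set V}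
    {w : ι → V} (hwP : convexHull ℝ (range w) ⊆ P) {x : V} (hx : x ∈ extremePoints ℝ P)
    (hxw : x ∈ convexHull ℝ (range w)) : x ∈ range w :=
  extremePoints_convexHull_subset
    (inter_extremePoints_subset_extremePoints_of_subset hwP ⟨hxw, hx⟩)

lemma IsExtreme.mem_nhds_of_mem_interior {V : Type*} [AddCommGroup V] [Module ℝ V]
    [TopologicalSpace V] [IsTopologicalAddGroup V] {P G : Set V} {x : V}
    (hG : IsExtreme ℝ P G) (hxG : x ∈ G) (hx : x ∈ interior P) : G ∈ 𝓝 x := by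
  have hP : ∀ᶠ y in 𝓝 x, y ∈ P := mem_interior_iff_mem_nhds.1 hx
  have hP' : ∀ᶠ y in 𝓝 x, x + (x - y) ∈ P :=
    ((continuous_const.add (continuous_const.sub continuous_id)).tendsto' x x
      (by simp)).eventually hP
  filter_upwards [hP, hP'] with y hy hy'
  have hseg : x ∈ openSegment ℝ (x - (x - y)) (x + (x - y)) := mem_openSegment_sub_add x (x - y)
  rw [sub_sub_cancel] at hseg
  exact hG.left_mem_of_mem_openSegment hy hy' hxG hseg

lemma LinearIndependent.notMem_convexHull_image_ne {ι V : Type*} [AddCommGroup V] [Module ℝ V]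
    {e : ι → V} (he : LinearIndependent ℝ e) (k : ι) :
    e k ∉ convexHull ℝ (e '' {j | j ≠ k}) := fun h =>
  he.notMem_span_image (s := {j | j ≠ k}) (by simp)
    (convexHull_min Submodule.subset_span (Submodule.span ℝ _).convex h)

lemma LinearIndependent.mem_extremePoints_convexHull {ι V : Type*} [Fintype ι] [AddCommGroup V]
    [Module ℝ V] [FiniteDimensional ℝ V] {e : ι → V} (he : LinearIndependent ℝ e)
    (hcard : Fintype.card ι = Module.finrank ℝ V) (i : ι) :
    e i ∈ extremePoints ℝ (convexHull ℝ (range e)) := by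
  rcases isEmpty_or_nonempty ι with hι | hι
  · exact isEmptyElim i
  simpa using (basisOfLinearIndependentOfCardEqFinrank he hcard).mem_extremePoints_convexHull i

section Polytope

variable {d : ℕ}

lemma dot_eq_dotProduct (x y : E d) : dot x y = x ⬝ᵥ y := rfl

lemma neg_dot (x y : E d) : dot (-x) y = -dot x y := neg_dotProduct x y

lemma dot_neg (x y : E d) : dot x (-y) = -dot x y := dotProduct_neg x y

lemma eq_of_forall_dot_eq {w : Fin d → E d} (hw : LinearIndependent ℝ w) {x y : E d}
    (h : ∀ j, dot x (w j) = dot y (w j)) : x = y :=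
  (dotProductEquiv ℝ (Fin d)).injective
    (LinearMap.ext_on_range (hw.span_eq_top_of_card_eq_finrank' (by simp)) h)

lemma IsLatticePt.neg {x : E d} (hx : IsLatticePt x) : IsLatticePt (-x) := fun i => by
  obtain ⟨n, hn⟩ := hx i
  exact ⟨-n, by simp [hn]⟩

lemma IsLatticePt.exists_int_dot {x y : E d} (hx : IsLatticePt x) (hy : IsLatticePt y) :
    ∃ n : ℤ, dot x y = n := by
  choose m hm using hx
  choose n hn using hy
  exact ⟨∑ i, m i * n i, by simp [dot, hm, hn]⟩

lemma IsLatticePolytope.isLatticePt_of_mem_extremePoints {P : Set (E d)}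
    (hP : IsLatticePolytope P) {x : E d} (hx : x ∈ extremePoints ℝ P) : IsLatticePt x := by
  obtain ⟨S, hS, rfl⟩ := hP
  exact hS x (extremePoints_convexHull_subset hx)

lemma IsReflexive.isLatticePt_of_mem_extremePoints_polarDual {P : Set (E d)}
    (hP : IsReflexive P) {z : E d} (hz : z ∈ extremePoints ℝ (polarDual P)) : IsLatticePt z := by
  rw [hP.2.2] at hz
  exact (extremePoints_convexHull_subset hz).2

lemma mem_extremePoints_polarDual {P : Set (E d)} {z : E d} {w : Fin d → E d}
    (hz : z ∈ polarDual P) (hw : LinearIndependent ℝ w) (hwP : ∀ j, w j ∈ P)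
    (hzw : ∀ j, dot z (w j) = -1) : z ∈ extremePoints ℝ (polarDual P) := by
  refine ⟨hz, fun x hx y hy ⟨a, b, ha, hb, hab, hxyz⟩ => eq_of_forall_dot_eq hw fun j => ?_⟩
  have hj : a * dot x (w j) + b * dot y (w j) = -1 := by
    rw [← hzw j, ← hxyz]
    simp [dot_eq_dotProduct, add_dotProduct, smul_dotProduct]
  have hxj := hx _ (hwP j)
  have hyj := hy _ (hwP j)
  rw [hzw]
  nlinarith

def IsFacetNormal (P G : Set (E d)) (u : E d) : Prop :=
  (∀ y ∈ P, dot u y ≤ 1) ∧ ∀ x, x ∈ G ↔ x ∈ P ∧ dot u x = 1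

lemma IsFacetNormal.subset {P G : Set (E d)} {u : E d} (hu : IsFacetNormal P G u) : G ⊆ P :=
  fun x hx => ((hu.2 x).1 hx).1

lemma IsFacet.notMem_of_mem_interior {P G : Set (E d)} (hG : IsFacet P G) (hd : 0 < d) {x : E d}
    (hx : x ∈ interior P) : x ∉ G := by
  intro hxG
  have hint : (interior G).Nonempty :=
    ⟨x, mem_interior_iff_mem_nhds.2 (hG.1.isExtreme.mem_nhds_of_mem_interior hxG hx)⟩
  have hrank := hG.2.2
  rw [affineSpan_eq_top_of_nonempty_interior (hint.mono (interior_mono (subset_convexHull ℝ G))),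
    AffineSubspace.direction_top, finrank_top, Module.finrank_fin_fun] at hrank
  omega

lemma IsFacet.exists_isFacetNormal {P G : Set (E d)} (hG : IsFacet P G) (hd : 0 < d)
    (h0 : 0 ∈ interior P) : ∃ u, IsFacetNormal P G u := by
  obtain ⟨l, hl⟩ := hG.1 hG.2.1
  obtain ⟨g, hg⟩ := hG.2.1
  rw [hl] at hg
  have hmem : ∀ x, x ∈ G ↔ x ∈ P ∧ l x = l g := fun x => by
    rw [hl]
    exact ⟨fun hx => ⟨hx.1, le_antisymm (hg.2 x hx.1) (hx.2 g hg.1)⟩,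
      fun hx => ⟨hx.1, fun y hy => (hg.2 y hy).trans hx.2.ge⟩⟩
  have h0P : (0 : E d) ∈ P := interior_subset h0
  have hpos : 0 < l g := by
    refine (by simpa using hg.2 0 h0P : 0 ≤ l g).lt_of_ne fun h => ?_
    exact hG.notMem_of_mem_interior hd h0 ((hmem 0).2 ⟨h0P, by simp [← h]⟩)
  obtain ⟨z, hz⟩ : ∃ z : E d, ∀ y, dot z y = l y :=
    ⟨_, LinearMap.congr_fun ((dotProductEquiv ℝ (Fin d)).apply_symm_apply l.toLinearMap)⟩
  have hdot : ∀ y, dot ((l g)⁻¹ • z) y = l y / l g := fun y => by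
    rw [dot_eq_dotProduct, smul_dotProduct, ← dot_eq_dotProduct, hz, smul_eq_mul, inv_mul_eq_div]
  refine ⟨(l g)⁻¹ • z, fun y hy => ?_, fun x => ?_⟩
  · rw [hdot, div_le_one hpos]
    exact hg.2 y hy
  · rw [hdot, div_eq_one_iff_eq hpos.ne', hmem]

lemma IsFacetNormal.isLatticePt {P G : Set (E d)} {u : E d} (hu : IsFacetNormal P G u)
    (hP : IsReflexive P) (hsimp : IsSimplicial P) (hG : IsFacet P G) : IsLatticePt u := by
  obtain ⟨w, hw, rfl⟩ := hsimp G hG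
  have hwG : ∀ j, w j ∈ P ∧ dot u (w j) = 1 := fun j =>
    (hu.2 _).1 (subset_convexHull ℝ _ ⟨j, rfl⟩)
  have hpolar : -u ∈ polarDual P := fun y hy => by
    rw [neg_dot]
    linarith [hu.1 y hy]
  have hext : -u ∈ extremePoints ℝ (polarDual P) :=
    mem_extremePoints_polarDual hpolar
      (hw.linearIndependent_of_forall_eq_one (dotProductEquiv ℝ (Fin d) u) fun j => (hwG j).2)
      (fun j => (hwG j).1) fun j => by rw [neg_dot, (hwG j).2]
  simpa using (hP.isLatticePt_of_mem_extremePoints_polarDual hext).neg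

lemma IsFacetNormal.mem_of_dot_pos {P G : Set (E d)} {u v : E d} (hu : IsFacetNormal P G u)
    (hulat : IsLatticePt u) (hv : v ∈ P) (hvlat : IsLatticePt v) (hpos : 0 < dot u v) :
    v ∈ G := by
  obtain ⟨n, hn⟩ := hulat.exists_int_dot hvlat
  have hn1 : n ≤ 1 := by exact_mod_cast hn ▸ hu.1 v hv
  have hn0 : 0 < n := by exact_mod_cast hn ▸ hpos
  exact (hu.2 v).2 ⟨hv, by rw [hn, show n = 1 by omega, Int.cast_one]⟩

lemma IsSimplicial.extremePoints_eq_range {P G : Set (E d)} (hsimp : IsSimplicial P)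
    (hG : IsFacet P G) {w : Fin d → E d} (hw : Injective w) (hwG : range w ⊆ extremePoints ℝ G) :
    extremePoints ℝ G = range w := by
  obtain ⟨b, -, rfl⟩ := hsimp G hG
  refine (eq_of_subset_of_ncard_le hwG ?_
    ((finite_range b).subset extremePoints_convexHull_subset)).symm
  calc (extremePoints ℝ (convexHull ℝ (range b))).ncard
      ≤ (range b).ncard := ncard_le_ncard extremePoints_convexHull_subset (finite_range b)
    _ ≤ d := by simpa using ncard_range_le b
    _ = (range w).ncard := by simp [ncard_range_of_injective hw]

def IsVertexAcrossRidge (P F : Set (E d)) (e : Fin d → E d) (i : Fin d) (x : E d) : Prop :=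
  x ∈ extremePoints ℝ P ∧
    ∃ G, IsFacet P G ∧ G ≠ F ∧ F ∩ G = convexHull ℝ (e '' {j | j ≠ i}) ∧ x ∈ G ∧ x ∉ range e

lemma exists_index_dot_pos {e : Fin d → E d} (he : LinearIndependent ℝ e) {u v : E d}
    (hue : ∀ i, dot u (e i) = 1) (huv : dot u v = 0) (hv : v ≠ 0) :
    ∃ k, ∀ u' : E d, (∀ j ≠ k, dot u' (e j) = 1) → dot u' (e k) < 1 → 0 < dot u' v := by
  obtain ⟨c, rfl⟩ : ∃ c : Fin d → ℝ, ∑ i, c i • e i = v := by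
    rw [← Submodule.mem_span_range_iff_exists_fun, he.span_eq_top_of_card_eq_finrank' (by simp)]
    trivial
  have hdot : ∀ u', dot u' (∑ i, c i • e i) = ∑ i, c i * dot u' (e i) := fun u' => by
    simp [dot_eq_dotProduct, dotProduct_sum, dotProduct_smul]
  have hc : ∑ i, c i = 0 := by simpa [hdot, hue] using huv
  obtain ⟨k, hk⟩ : ∃ k, c k < 0 := by
    by_contra! h
    exact hv (by simp [(Finset.sum_eq_zero_iff_of_nonneg fun i _ => h i).1 hc])
  refine ⟨k, fun u' hu' hlt => ?_⟩
  have hsplit : ∑ i, c i * dot u' (e i) = ∑ i, c i + c k * (dot u' (e k) - 1) := by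
    rw [← Finset.add_sum_erase _ _ (Finset.mem_univ k),
      ← Finset.add_sum_erase _ c (Finset.mem_univ k),
      Finset.sum_congr rfl fun i hi => by rw [hu' i (Finset.ne_of_mem_erase hi), mul_one]]
    ring
  rw [hdot, hsplit, hc, zero_add]
  exact mul_pos_of_neg_of_neg hk (by linarith)

lemma mem_range_of_dot_eq_zero {P F : Set (E d)} {e v' : Fin d → E d} {u v : E d}
    (hP : IsReflexive P) (hsimp : IsSimplicial P) (he : LinearIndependent ℝ e)
    (hFe : F = convexHull ℝ (range e)) (heP : ∀ i, e i ∈ extremePoints ℝ P)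
    (hue : ∀ i, dot u (e i) = 1)
    (hv' : ∀ i, IsVertexAcrossRidge P F e i (v' i))
    (hv : v ∈ extremePoints ℝ P) (hv0 : v ≠ 0) (huv : dot u v = 0) : v ∈ range v' := by
  obtain ⟨k, hk⟩ := exists_index_dot_pos he hue huv hv0
  obtain ⟨hv'P, G, hG, -, hFG, hv'G, hv'e⟩ := hv' k
  obtain ⟨uk, huk⟩ := hG.exists_isFacetNormal k.pos hP.2.1
  have heG : ∀ j ≠ k, e j ∈ G := fun j hj =>
    (hFG.symm ▸ subset_convexHull ℝ _ ⟨j, hj, rfl⟩ : e j ∈ F ∩ G).2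
  have hekG : e k ∉ G := fun h =>
    he.notMem_convexHull_image_ne k (hFG ▸ ⟨hFe ▸ subset_convexHull ℝ _ ⟨k, rfl⟩, h⟩)
  have hekuk : dot uk (e k) < 1 :=
    (huk.1 _ (heP k).1).lt_of_ne fun h => hekG ((huk.2 _).2 ⟨(heP k).1, h⟩)
  have hvG : v ∈ G :=
    huk.mem_of_dot_pos (huk.isLatticePt hP hsimp hG) hv.1 (hP.1.isLatticePt_of_mem_extremePoints hv)
      (hk uk (fun j hj => ((huk.2 _).1 (heG j hj)).2) hekuk)
  have hvert : extremePoints ℝ G = range (update e k (v' k)) := by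
    refine hsimp.extremePoints_eq_range hG (he.injective.update_of_notMem_range k hv'e) ?_
    rintro _ ⟨j, rfl⟩
    refine inter_extremePoints_subset_extremePoints_of_subset hG.1.subset ?_
    rcases eq_or_ne j k with rfl | hj
    · simpa using ⟨hv'G, hv'P⟩
    · simpa [update_of_ne hj] using ⟨heG j hj, heP j⟩
  obtain ⟨j, hj⟩ : v ∈ range (update e k (v' k)) :=
    hvert ▸ inter_extremePoints_subset_extremePoints_of_subset hG.1.subset ⟨hvG, hv⟩
  rcases eq_or_ne j k with rfl | hjk
  · exact ⟨j, by simpa using hj⟩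
  · rw [update_of_ne hjk] at hj
    simp [← hj, hue] at huv

lemma IsFacetNormal.neg_of_isFacet {P F : Set (E d)} {e : Fin d → E d} {u : E d}
    (hu : IsFacetNormal P F u) (hFneg : IsFacet P (-F)) (hd : 0 < d) (h0 : 0 ∈ interior P)
    (he : LinearIndependent ℝ e) (heF : ∀ i, e i ∈ F) : IsFacetNormal P (-F) (-u) := by
  obtain ⟨u', hu'⟩ := hFneg.exists_isFacetNormal hd h0
  convert hu'
  refine (eq_of_forall_dot_eq he fun i => ?_).symm
  have h1 := ((hu'.2 _).1 (neg_mem_neg.2 (heF i))).2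
  rw [dot_neg] at h1
  rw [neg_dot, ((hu.2 _).1 (heF i)).2]
  linarith

lemma extremePoints_subset_of_isFacetNormal {P F : Set (E d)} {e v' : Fin d → E d} {u : E d}
    (hd : 0 < d) (hP : IsReflexive P) (hsimp : IsSimplicial P) (hF : IsFacet P F)
    (he : LinearIndependent ℝ e) (hFe : F = convexHull ℝ (range e))
    (hv' : ∀ i, IsVertexAcrossRidge P F e i (v' i))
    (hu : IsFacetNormal P F u) (hu' : IsFacetNormal P (-F) (-u)) :
    extremePoints ℝ P ⊆ range e ∪ range (fun i => -(e i)) ∪ range v' := by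
  have : Nonempty (Fin d) := ⟨⟨0, hd⟩⟩
  have hue : ∀ i, dot u (e i) = 1 := fun i =>
    ((hu.2 _).1 (hFe ▸ subset_convexHull ℝ _ ⟨i, rfl⟩)).2
  have heP : ∀ i, e i ∈ extremePoints ℝ P := fun i =>
    hF.1.isExtreme.extremePoints_subset_extremePoints
      (hFe ▸ he.mem_extremePoints_convexHull (by simp) i)
  have hnegF : -F = convexHull ℝ (range fun i => -(e i)) := by
    rw [hFe, ← convexHull_neg, neg_range]
  intro v hv
  obtain ⟨n, hn⟩ := (hu.isLatticePt hP hsimp hF).exists_int_dot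
    (hP.1.isLatticePt_of_mem_extremePoints hv)
  have hn1 : n ≤ 1 := by exact_mod_cast hn ▸ hu.1 v hv.1
  have hn2 : -1 ≤ n := by
    have := hu'.1 v hv.1
    rw [neg_dot, hn] at this
    exact_mod_cast (by linarith : (-1 : ℝ) ≤ n)
  interval_cases n
  · refine Or.inl (Or.inr (mem_range_of_mem_extremePoints (hnegF ▸ hu'.subset) hv
      (hnegF ▸ (hu'.2 v).2 ⟨hv.1, ?_⟩)))
    rw [neg_dot, hn]
    simp
  · exact Or.inr (mem_range_of_dot_eq_zero hP hsimp he hFe heP hue hv' hv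
      ((disjoint_interior_extremePoints P).ne_of_mem hP.2.1 hv).symm (by simpa using hn))
  · exact Or.inl (Or.inl (mem_range_of_mem_extremePoints (hFe ▸ hu.subset) hv
      (hFe ▸ (hu.2 v).2 ⟨hv.1, by simpa using hn⟩)))

end Polytope

theorem vertices_of_pseudoSymmetric (d : ℕ) (P F : Set (E d)) (e v' : Fin d → E d)
    (hP : IsReflexive P) (hsimp : IsSimplicial P)
    (hF : IsFacet P F) (hFneg : IsFacet P (-F))
    (he : LinearIndependent ℝ e) (hFe : F = convexHull ℝ (Set.range e))
    (hv' : ∀ i, v' i ∈ Set.extremePoints ℝ P ∧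
      ∃ G, IsFacet P G ∧ G ≠ F ∧ F ∩ G = convexHull ℝ (e '' {j | j ≠ i}) ∧
        v' i ∈ G ∧ v' i ∉ Set.range e) :
    Set.extremePoints ℝ P
        ⊆ Set.range e ∪ Set.range (fun i => -(e i)) ∪ Set.range v' ∧
    (Set.extremePoints ℝ P).ncard ≤ 3 * d := by
  have hd : 0 < d := by
    obtain ⟨x, hx⟩ := hF.2.1
    rw [hFe] at hx
    exact Nat.pos_of_ne_zero fun h => by subst h; simp at hx
  have heF : ∀ i, e i ∈ F := fun i => hFe ▸ subset_convexHull ℝ _ ⟨i, rfl⟩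
  obtain ⟨u, hu⟩ := hF.exists_isFacetNormal hd hP.2.1
  have hsub := extremePoints_subset_of_isFacetNormal hd hP hsimp hF he hFe hv' hu
    (hu.neg_of_isFacet hFneg hd hP.2.1 he heF)
  refine ⟨hsub, (ncard_le_ncard hsub
    (((finite_range _).union (finite_range _)).union (finite_range _))).trans ?_⟩
  have hrange : ∀ f : Fin d → E d, (range f).ncard ≤ d := fun f =>
    (ncard_range_le f).trans_eq (Fintype.card_fin d)
  calc (range e ∪ range (fun i => -(e i)) ∪ range v').ncard
      ≤ (range e).ncard + (range (fun i => -(e i))).ncard + (range v').ncard :=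
        (ncard_union_le _ _).trans (add_le_add_left (ncard_union_le _ _) _)
    _ ≤ 3 * d := by linarith [hrange e, hrange (fun i => -(e i)), hrange v']
end
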